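/- arXiv:2210.09451 — 3 statements merged into one kernel-verified Lean document; each statement's English description precedes it below -/
import Mathlib

section
/- For any positive integers a and d, the number of odd coefficients of f_a^{2^d}/(1-q^a) in degrees n ≤ x is asymptotic to 2x/(3a) as x → ∞, and all these odd coefficients occur in degrees divisible by a. -/
open scoped Classical

/-- `f a = ∏_{i ≥ 1} (1 - q^{a i})` as a formal power series over `ℤ`. -/
noncomputable def fEta (a : ℕ) : PowerSeries ℤ :=
  PowerSeries.mk fun n =>
    PowerSeries.coeff n
      (∏ i ∈ Finset.Icc 1 (n + 1), (1 - (PowerSeries.X : PowerSeries ℤ) ^ (a * i)))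

/-- `1/(1-q^a) = ∑_{j ≥ 0} q^{a j}` over `ℤ`. -/
noncomputable def geomA (a : ℕ) : PowerSeries ℤ :=
  PowerSeries.mk fun n => if a ∣ n then 1 else 0

/-- Number of `n ≤ x` in which the coefficient of `q^n` in `A` is odd. -/
noncomputable def oddCount (A : PowerSeries ℤ) (x : ℕ) : ℕ :=
  ((Finset.range (x + 1)).filter fun n => Odd (PowerSeries.coeff n A)).card

def wpent : ℕ → ℕ
  | 0 => 0
  | (m+1) => wpent m + (if m % 2 = 0 then m + 1 else m / 2 + 1)

lemma wpent_closed (j : ℕ) :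
    2 * wpent (2*j) = j*(3*j+1) ∧ 2 * wpent (2*j+1) = (j+1)*(3*j+2) := by
  induction j with
  | zero => simp [wpent]
  | succ j ih =>
    obtain ⟨h1, h2⟩ := ih
    have e1 : 2*j+1+1 = 2*(j+1) := by ring
    have hA : wpent (2*(j+1)) = wpent (2*j+1) + ((2*j+1)/2 + 1) := by
      rw [← e1, wpent]; simp [Nat.add_mod]
    have hB : wpent (2*(j+1)+1) = wpent (2*(j+1)) + (2*(j+1)+1) := by
      rw [wpent]; simp [Nat.mul_mod_right]
    have r1 : (j+1)*(3*(j+1)+1) = (j+1)*(3*j+2) + 2*(j+1) := by ring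
    have r2 : (j+1+1)*(3*(j+1)+2) = (j+1)*(3*(j+1)+1) + 2*(2*(j+1)+1) := by ring
    omega

lemma wpent_strictMono : StrictMono wpent := by
  apply strictMono_nat_of_lt_succ
  intro n
  rw [wpent]
  split <;> omega

lemma self_le_wpent (m : ℕ) : m ≤ wpent m := wpent_strictMono.le_apply

/-- generalized pentagonal predicate -/
def PentN (N : ℕ) : Prop := ∃ k : ℕ, 2*N = k*(3*k-1) ∨ 2*N = k*(3*k+1)

lemma pent_iff_wpent (N : ℕ) : PentN N ↔ ∃ m, wpent m = N := by
  constructor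
  · rintro ⟨k, hk | hk⟩
    · rcases Nat.eq_zero_or_pos k with rfl | hk1
      · exact ⟨0, by simp [wpent]; omega⟩
      · obtain ⟨n, rfl⟩ : ∃ n, k = n + 1 := ⟨k - 1, by omega⟩
        refine ⟨2*n+1, ?_⟩
        have h := (wpent_closed n).2
        have e : 3*(n+1)-1 = 3*n+2 := by omega
        rw [e] at hk; omega
    · refine ⟨2*k, ?_⟩
      have := (wpent_closed k).1
      omega
  · rintro ⟨m, rfl⟩
    rcases Nat.even_or_odd m with ⟨j, rfl⟩ | ⟨j, rfl⟩
    · have e : j + j = 2*j := by ring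
      rw [e]
      exact ⟨j, Or.inr (by have := (wpent_closed j).1; omega)⟩
    · refine ⟨j+1, Or.inl ?_⟩
      have h := (wpent_closed j).2
      have e : 3*(j+1)-1 = 3*j+2 := by omega
      rw [e]
      omega

lemma pentA_inj (k k' : ℕ) (h : k*(3*k-1) = k'*(3*k'-1)) : k = k' := by
  rcases Nat.eq_zero_or_pos k with rfl | hk
  · rcases Nat.eq_zero_or_pos k' with rfl | hk'
    · rfl
    · exfalso; have h2 : 2 ≤ 3*k'-1 := by omega
      have := Nat.mul_le_mul hk' h2
      omega
  · rcases Nat.eq_zero_or_pos k' with rfl | hk'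
    · exfalso; have h2 : 2 ≤ 3*k-1 := by omega
      have := Nat.mul_le_mul hk h2
      omega
    · have e1 : (↑(k*(3*k-1)) : ℤ) = (k:ℤ)*(3*k-1) := by
        push_cast [Nat.cast_sub (by omega : 1 ≤ 3*k)]; ring
      have e2 : (↑(k'*(3*k'-1)) : ℤ) = (k':ℤ)*(3*k'-1) := by
        push_cast [Nat.cast_sub (by omega : 1 ≤ 3*k')]; ring
      have hz : (k:ℤ)*(3*k-1) = (k':ℤ)*(3*k'-1) := by rw [← e1, ← e2]; exact_mod_cast h
      have hk1 : (1:ℤ) ≤ k := by exact_mod_cast hk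
      have hk1' : (1:ℤ) ≤ k' := by exact_mod_cast hk'
      rcases lt_trichotomy (k:ℤ) (k':ℤ) with hlt | heq | hgt
      · exfalso; nlinarith
      · exact_mod_cast heq
      · exfalso; nlinarith

lemma pentB_inj (k k' : ℕ) (h : k*(3*k+1) = k'*(3*k'+1)) : k = k' := by
  rcases lt_trichotomy k k' with hlt | heq | hgt
  · exfalso; nlinarith
  · exact heq
  · exfalso; nlinarith

lemma pent_cross (k k' : ℕ) (hk : 1 ≤ k) (hk' : 1 ≤ k') : k*(3*k-1) ≠ k'*(3*k'+1) := by
  intro h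
  have e1 : (↑(k*(3*k-1)) : ℤ) = (k:ℤ)*(3*k-1) := by
    push_cast [Nat.cast_sub (by omega : 1 ≤ 3*k)]; ring
  have hz : (k:ℤ)*(3*k-1) = (k':ℤ)*(3*k'+1) := by
    rw [← e1]; rw [h]; push_cast; ring
  have hk1 : (1:ℤ) ≤ k := by exact_mod_cast hk
  have hk1' : (1:ℤ) ≤ k' := by exact_mod_cast hk'
  have hz2 : ((6*(k:ℤ)-1) - (6*(k':ℤ)+1)) * ((6*(k:ℤ)-1) + (6*(k':ℤ)+1)) = 0 := by nlinarith
  rcases mul_eq_zero.mp hz2 with h0 | h0 <;> omega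
open Finset

/-- max of a finset of naturals -/
noncomputable def Mx (t : Finset ℕ) : ℕ := t.sup id
/-- min of a finset of naturals -/
noncomputable def Mn (t : Finset ℕ) : ℕ := sInf {x | x ∈ t}
/-- staircase length from the top -/
noncomputable def SL (t : Finset ℕ) : ℕ := sInf {j | 0 < j ∧ Mx t - j ∉ t}

lemma le_Mx {t : Finset ℕ} {a : ℕ} (h : a ∈ t) : a ≤ Mx t := Finset.le_sup (f := id) h

lemma Mx_mem {t : Finset ℕ} (hne : t.Nonempty) : Mx t ∈ t := by
  obtain ⟨b, hb, he⟩ := Finset.exists_mem_eq_sup t hne id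
  rw [Mx, he]; exact hb

lemma Mn_le {t : Finset ℕ} {a : ℕ} (h : a ∈ t) : Mn t ≤ a := Nat.sInf_le h

lemma Mn_mem {t : Finset ℕ} (hne : t.Nonempty) : Mn t ∈ t := by
  obtain ⟨a, ha⟩ := hne
  exact Nat.sInf_mem ⟨a, ha⟩

section SLprops
variable {t : Finset ℕ}

lemma Mx_pos (h0 : 0 ∉ t) (hne : t.Nonempty) : 0 < Mx t := by
  rcases Nat.eq_zero_or_pos (Mx t) with h | h
  · exact absurd (h ▸ Mx_mem hne) h0
  · exact h

lemma SL_set_nonempty (h0 : 0 ∉ t) (hne : t.Nonempty) : {j | 0 < j ∧ Mx t - j ∉ t}.Nonempty :=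
  ⟨Mx t, Mx_pos h0 hne, by simpa using h0⟩

lemma SL_pos (h0 : 0 ∉ t) (hne : t.Nonempty) : 0 < SL t := (Nat.sInf_mem (SL_set_nonempty h0 hne)).1

lemma SL_not_mem (h0 : 0 ∉ t) (hne : t.Nonempty) : Mx t - SL t ∉ t := (Nat.sInf_mem (SL_set_nonempty h0 hne)).2

lemma SL_le_Mx (h0 : 0 ∉ t) (hne : t.Nonempty) : SL t ≤ Mx t := Nat.sInf_le ⟨Mx_pos h0 hne, by simpa using h0⟩

lemma SL_min (h0 : 0 ∉ t) (hne : t.Nonempty) {j : ℕ} (hj : 0 < j) (hjl : j < SL t) : Mx t - j ∈ t := by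
  have := Nat.notMem_of_lt_sInf (by exact hjl : j < SL t)
  by_contra hcon
  exact this ⟨hj, hcon⟩

lemma stair_mem (h0 : 0 ∉ t) (hne : t.Nonempty) {x : ℕ} (hx1 : Mx t - SL t < x) (hx2 : x ≤ Mx t) : x ∈ t := by
  rcases eq_or_lt_of_le hx2 with rfl | hlt
  · exact Mx_mem hne
  · have hSL : SL t ≤ Mx t := SL_le_Mx h0 hne
    have h1 : 0 < Mx t - x := by omega
    have h2 : Mx t - x < SL t := by omega
    have := SL_min h0 hne h1 h2
    have e : Mx t - (Mx t - x) = x := by omega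
    rwa [e] at this

end SLprops

/-- Franklin's involution -/
noncomputable def frk (t : Finset ℕ) : Finset ℕ :=
  if Mn t ≤ SL t then insert (Mx t + 1) ((t.erase (Mn t)).erase (Mx t - Mn t + 1))
  else insert (SL t) (insert (Mx t - SL t) (t.erase (Mx t)))

/-- Exceptional (pentagonal staircase) sets -/
def Exc (t : Finset ℕ) : Prop :=
  ∃ k, 0 < k ∧ (t = Finset.Icc k (2*k-1) ∨ t = Finset.Icc (k+1) (2*k))

lemma caseA (t : Finset ℕ) (h0 : 0 ∉ t) (hne : t.Nonempty) (hexc : ¬ Exc t)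
    (hsl : Mn t ≤ SL t) :
    (0 ∉ frk t) ∧ (frk t).Nonempty ∧ (∑ i ∈ frk t, i = ∑ i ∈ t, i) ∧ ¬Exc (frk t)
      ∧ frk (frk t) = t ∧ frk t ≠ t := by
  set M := Mx t with hM
  set s := Mn t with hs
  set L := SL t with hL
  have hs1 : 1 ≤ s := by
    have := Mn_mem hne; rcases Nat.eq_zero_or_pos s with h | h
    · exact absurd (h ▸ this) h0
    · exact h
  have hsM : s ≤ M := Mn_le (Mx_mem hne)
  have hLM : L ≤ M := SL_le_Mx h0 hne
  have hm1mem : M - s + 1 ∈ t := by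
    apply stair_mem h0 hne <;> omega
  have hs_le : s ≤ M - s + 1 := Mn_le hm1mem
  have hM2s : 2*s ≤ M := by
    by_contra h'
    have hMeq : M = 2*s - 1 := by omega
    apply hexc
    refine ⟨s, hs1, Or.inl ?_⟩
    rw [← hMeq]
    ext x
    simp only [Finset.mem_Icc]
    constructor
    · intro hx; exact ⟨Mn_le hx, le_Mx hx⟩
    · rintro ⟨hx1, hx2⟩
      apply stair_mem h0 hne _ hx2
      omega
  set u := insert (M+1) ((t.erase s).erase (M - s + 1)) with hu
  have hfrk : frk t = u := by rw [frk, if_pos hsl]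
  have mem_u : ∀ x, x ∈ u ↔ (x = M + 1 ∨ (x ∈ t ∧ x ≠ s ∧ x ≠ M - s + 1)) := by
    intro x
    simp only [hu, Finset.mem_insert, Finset.mem_erase]
    tauto
  have u0 : 0 ∉ u := by
    rw [mem_u]; push_neg
    exact ⟨by omega, fun h => absurd h h0⟩
  have une : u.Nonempty := ⟨M+1, by rw [mem_u]; left; rfl⟩
  have uMx : Mx u = M + 1 := by
    apply le_antisymm
    · apply Finset.sup_le
      intro x hx
      rw [mem_u] at hx
      rcases hx with rfl | ⟨hx, _, _⟩
      · exact le_refl _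
      · exact le_trans (le_Mx hx) (by omega)
    · exact le_Mx (by rw [mem_u]; left; rfl)
  have uMn_gt : ∀ x ∈ u, s + 1 ≤ x := by
    intro x hx
    rw [mem_u] at hx
    rcases hx with rfl | ⟨hx, hxs, _⟩
    · omega
    · have := Mn_le hx; omega
  have uMn : s + 1 ≤ Mn u := uMn_gt _ (Mn_mem une)
  have uSL : SL u = s := by
    apply le_antisymm
    · apply Nat.sInf_le
      refine ⟨by omega, ?_⟩
      rw [uMx, mem_u]
      push_neg
      refine ⟨by omega, fun _ _ => by omega⟩
    · by_contra h'
      push_neg at h'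
      have hj0 : 0 < SL u := SL_pos u0 une
      have hjn : Mx u - SL u ∉ u := SL_not_mem u0 une
      apply hjn
      rw [uMx, mem_u]
      right
      have hLj : SL u < s := h'
      refine ⟨?_, by omega, by omega⟩
      apply stair_mem h0 hne <;> omega
  have ucase : ¬ (Mn u ≤ SL u) := by omega
  have hfrku : frk u = t := by
    rw [frk, if_neg ucase, uSL, uMx]
    have e1 : u.erase (M+1) = (t.erase s).erase (M - s + 1) := by
      rw [hu]
      apply Finset.erase_insert
      intro hcon
      have := Finset.mem_of_mem_erase (Finset.mem_of_mem_erase hcon)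
      have := le_Mx this
      omega
    have e2 : M + 1 - s = M - s + 1 := by omega
    rw [e1, e2]
    rw [Finset.insert_erase (by
      rw [Finset.mem_erase]
      exact ⟨by omega, hm1mem⟩)]
    exact Finset.insert_erase (Mn_mem hne)
  have usum : ∑ i ∈ u, i = ∑ i ∈ t, i := by
    have h1 : ∑ i ∈ t.erase s, i + s = ∑ i ∈ t, i := by
      simpa using Finset.sum_erase_add t id (Mn_mem hne)
    have hmem2 : M - s + 1 ∈ t.erase s := by
      rw [Finset.mem_erase]; exact ⟨by omega, hm1mem⟩
    have h2 : ∑ i ∈ (t.erase s).erase (M-s+1), i + (M-s+1) = ∑ i ∈ t.erase s, i := by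
      simpa using Finset.sum_erase_add (t.erase s) id hmem2
    have h3 : ∑ i ∈ u, i = (M+1) + ∑ i ∈ (t.erase s).erase (M-s+1), i := by
      rw [hu]
      apply Finset.sum_insert
      intro hcon
      have := le_Mx (Finset.mem_of_mem_erase (Finset.mem_of_mem_erase hcon))
      omega
    omega
  have unexc : ¬ Exc u := by
    rintro ⟨k, hk, h | h⟩
    · have hkmem : k ∈ u := by rw [h]; simp [Finset.mem_Icc]; omega
      have hMn_le_k : Mn u ≤ k := Mn_le hkmem
      have h2k : 2*k-1 ∈ u := by rw [h]; simp [Finset.mem_Icc]; omega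
      have hMxle : Mx u ≤ 2*k-1 := by
        apply Finset.sup_le
        intro x hx
        rw [h, Finset.mem_Icc] at hx
        exact hx.2
      have hMxge : 2*k-1 ≤ Mx u := le_Mx h2k
      have hnotm := SL_not_mem u0 une
      apply hnotm
      rw [uSL, uMx, h, Finset.mem_Icc]
      rw [uMx] at hMxle hMxge
      omega
    · have hkmem : k+1 ∈ u := by rw [h]; simp [Finset.mem_Icc]; omega
      have hMn_le_k : Mn u ≤ k+1 := Mn_le hkmem
      have h2k : 2*k ∈ u := by rw [h]; simp [Finset.mem_Icc]; omega
      have hMxge : 2*k ≤ Mx u := le_Mx h2k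
      have hMxle : Mx u ≤ 2*k := by
        apply Finset.sup_le
        intro x hx
        rw [h, Finset.mem_Icc] at hx
        exact hx.2
      -- M + 1 = 2k, s ≤ k; SL u = s: Mx u - s = 2k - s ∉ u
      have hnotm := SL_not_mem u0 une
      rcases eq_or_lt_of_le (show s ≤ k by omega) with rfl | hsk
      · rw [uMx] at hMxge; omega
      · apply hnotm
        rw [uSL, uMx, h, Finset.mem_Icc]
        rw [uMx] at hMxle hMxge
        omega
  have hne2 : frk t ≠ t := by
    rw [hfrk]
    intro hcon
    have : M + 1 ∈ t := by rw [← hcon, mem_u]; left; rfl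
    have := le_Mx this
    omega
  rw [hfrk]
  exact ⟨u0, une, usum, unexc, by rw [hfrku], hfrk ▸ hne2⟩

lemma caseB (t : Finset ℕ) (h0 : 0 ∉ t) (hne : t.Nonempty) (hexc : ¬ Exc t)
    (hsl : ¬ (Mn t ≤ SL t)) :
    (0 ∉ frk t) ∧ (frk t).Nonempty ∧ (∑ i ∈ frk t, i = ∑ i ∈ t, i) ∧ ¬Exc (frk t)
      ∧ frk (frk t) = t ∧ frk t ≠ t := by
  set M := Mx t with hM
  set s := Mn t with hs
  set L := SL t with hL
  have hLs : L < s := by omega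
  have hs1 : 1 ≤ s := by
    have := Mn_mem hne; rcases Nat.eq_zero_or_pos s with h | h
    · exact absurd (h ▸ this) h0
    · exact h
  have hsM : s ≤ M := Mn_le (Mx_mem hne)
  have hL1 : 1 ≤ L := SL_pos h0 hne
  have hLM : L ≤ M := SL_le_Mx h0 hne
  have hMLnot : M - L ∉ t := SL_not_mem h0 hne
  have hLt : L ∉ t := fun h => by have := Mn_le h; omega
  have hstair : M - L + 1 ∈ t := by
    apply stair_mem h0 hne <;> omega
  have hsle : s ≤ M - L + 1 := Mn_le hstair
  have hM2L : 2*L + 1 ≤ M := by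
    by_contra h'
    have hMeq : M = 2*L := by omega
    have hseq : s = L + 1 := by omega
    apply hexc
    refine ⟨L, hL1, Or.inr ?_⟩
    ext x
    simp only [Finset.mem_Icc]
    constructor
    · intro hx
      have := Mn_le hx; have := le_Mx hx; omega
    · rintro ⟨hx1, hx2⟩
      apply stair_mem h0 hne <;> omega
  set u := insert L (insert (M - L) (t.erase M)) with hu
  have hfrk : frk t = u := by rw [frk, if_neg hsl]
  have mem_u : ∀ x, x ∈ u ↔ (x = L ∨ x = M - L ∨ (x ∈ t ∧ x ≠ M)) := by
    intro x
    simp only [hu, Finset.mem_insert, Finset.mem_erase]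
    tauto
  have u0 : 0 ∉ u := by
    rw [mem_u]; push_neg
    exact ⟨by omega, by omega, fun h => absurd h h0⟩
  have une : u.Nonempty := ⟨L, by rw [mem_u]; left; rfl⟩
  have uMx : Mx u = M - 1 := by
    apply le_antisymm
    · apply Finset.sup_le
      intro x hx
      rw [mem_u] at hx
      simp only [id_eq]
      rcases hx with rfl | rfl | ⟨hx, hxM⟩
      · omega
      · omega
      · have := le_Mx hx; omega
    · apply le_Mx
      rw [mem_u]
      rcases eq_or_lt_of_le hL1 with h1 | h1
      · right; left; omega
      · right; right
        constructor
        · apply stair_mem h0 hne <;> omega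
        · omega
  have uMn : Mn u = L := by
    apply le_antisymm
    · exact Mn_le (by rw [mem_u]; left; rfl)
    · have := Mn_mem une
      rw [mem_u] at this
      rcases this with h1 | h1 | ⟨h1, _⟩
      · omega
      · omega
      · have := Mn_le h1; omega
  have uSL_ge : L ≤ SL u := by
    by_contra h'
    push_neg at h'
    have hj0 : 0 < SL u := SL_pos u0 une
    have hjn : Mx u - SL u ∉ u := SL_not_mem u0 une
    apply hjn
    rw [uMx, mem_u]
    rcases eq_or_lt_of_le (show SL u + 1 ≤ L by omega) with he | hlt
    · right; left; omega
    · right; right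
      have hmem : M - (SL u + 1) ∈ t := SL_min h0 hne (by omega) (by omega)
      constructor
      · have e : M - 1 - SL u = M - (SL u + 1) := by omega
        rw [e]; exact hmem
      · omega
  have ucase : Mn u ≤ SL u := by omega
  have hfrku : frk u = t := by
    rw [frk, if_pos ucase, uMx, uMn]
    have e0 : M - 1 + 1 = M := by omega
    have e1 : M - 1 - L + 1 = M - L := by omega
    have e2 : u.erase L = insert (M-L) (t.erase M) := by
      rw [hu]
      apply Finset.erase_insert
      rw [Finset.mem_insert, Finset.mem_erase]
      push_neg
      exact ⟨by omega, fun _ => hLt⟩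
    have e3 : (insert (M-L) (t.erase M)).erase (M-L) = t.erase M := by
      apply Finset.erase_insert
      rw [Finset.mem_erase]
      push_neg
      exact fun _ => hMLnot
    rw [e0, e1, e2, e3]
    exact Finset.insert_erase (Mx_mem hne)
  have usum : ∑ i ∈ u, i = ∑ i ∈ t, i := by
    have h1 : ∑ i ∈ t.erase M, i + M = ∑ i ∈ t, i := by
      simpa using Finset.sum_erase_add t id (Mx_mem hne)
    have h2 : M - L ∉ t.erase M := by
      rw [Finset.mem_erase]; push_neg
      exact fun _ => hMLnot
    have h3 : L ∉ insert (M-L) (t.erase M) := by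
      rw [Finset.mem_insert, Finset.mem_erase]
      push_neg
      exact ⟨by omega, fun _ => hLt⟩
    have h4 : ∑ i ∈ u, i = L + (M - L + ∑ i ∈ t.erase M, i) := by
      rw [hu, Finset.sum_insert h3, Finset.sum_insert h2]
    omega
  have unexc : ¬ Exc u := by
    rintro ⟨k, hk, h | h⟩
    · have hkmem : k ∈ u := by rw [h]; simp [Finset.mem_Icc]; omega
      have h2k : 2*k-1 ∈ u := by rw [h]; simp [Finset.mem_Icc]; omega
      have hMxge : 2*k-1 ≤ Mx u := le_Mx h2k
      have hMn1 : Mn u ≤ k := Mn_le hkmem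
      have hMn2 : k ≤ Mn u := by
        have h5 : ∀ x ∈ u, k ≤ x := by
          intro x hx; rw [h, Finset.mem_Icc] at hx; omega
        exact h5 _ (Mn_mem une)
      have hMxle : Mx u ≤ 2*k-1 := by
        apply Finset.sup_le
        intro x hx
        rw [h, Finset.mem_Icc] at hx
        exact hx.2
      rw [uMx] at hMxle hMxge
      omega
    · have hkmem : k+1 ∈ u := by rw [h]; simp [Finset.mem_Icc]; omega
      have h2k : 2*k ∈ u := by rw [h]; simp [Finset.mem_Icc]; omega
      have hMxge : 2*k ≤ Mx u := le_Mx h2k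
      have hMn1 : Mn u ≤ k+1 := Mn_le hkmem
      have hMn2 : k+1 ≤ Mn u := by
        have h5 : ∀ x ∈ u, k+1 ≤ x := by
          intro x hx; rw [h, Finset.mem_Icc] at hx; omega
        exact h5 _ (Mn_mem une)
      have hMxle : Mx u ≤ 2*k := by
        apply Finset.sup_le
        intro x hx
        rw [h, Finset.mem_Icc] at hx
        simp only [id_eq]
        exact hx.2
      have e1 : Mn u = k + 1 := le_antisymm hMn1 hMn2
      have e2 : L = k + 1 := by rw [← uMn, e1]
      rw [uMx] at hMxle hMxge
      omega
  have hne2 : frk t ≠ t := by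
    rw [hfrk]
    intro hcon
    have hMt : M ∈ t := Mx_mem hne
    have : M ∈ u := by rw [hcon]; exact hMt
    rw [mem_u] at this
    rcases this with h1 | h1 | ⟨_, h1⟩ <;> omega
  rw [hfrk]
  exact ⟨u0, une, usum, unexc, by rw [hfrku], hfrk ▸ hne2⟩

lemma sum_Icc_two (k n : ℕ) (h : k ≤ n + 1) :
    2 * ∑ i ∈ Finset.Icc k n, i = (k + n) * (n + 1 - k) := by
  induction n with
  | zero =>
    interval_cases k
    · simp
    · simp
  | succ n ih =>
    rcases eq_or_lt_of_le h with rfl | h'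
    · rw [Finset.Icc_eq_empty (by omega)]
      simp
    · have hk : k ≤ n + 1 := by omega
      rw [Finset.sum_Icc_succ_top hk]
      have IH := ih hk
      zify [hk, show k ≤ n + 2 by omega] at IH ⊢
      linear_combination IH

noncomputable def Eset (N : ℕ) : Finset (Finset ℕ) :=
  (Finset.Icc 1 N).powerset.filter (fun t => ∑ i ∈ t, i = N)

lemma mem_Eset {N : ℕ} {t : Finset ℕ} :
    t ∈ Eset N ↔ (0 ∉ t ∧ ∑ i ∈ t, i = N) := by
  rw [Eset, Finset.mem_filter, Finset.mem_powerset]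
  constructor
  · rintro ⟨hsub, hsum⟩
    refine ⟨fun hcon => ?_, hsum⟩
    have := hsub hcon
    rw [Finset.mem_Icc] at this
    omega
  · rintro ⟨h0, hsum⟩
    refine ⟨fun x hx => ?_, hsum⟩
    rw [Finset.mem_Icc]
    constructor
    · rcases Nat.eq_zero_or_pos x with rfl | h
      · exact absurd hx h0
      · exact h
    · calc x = id x := rfl
        _ ≤ ∑ i ∈ t, i := Finset.single_le_sum (fun i _ => Nat.zero_le _) hx
        _ = N := hsum

lemma sum_exc_A (k : ℕ) (hk : 1 ≤ k) :
    2 * ∑ i ∈ Finset.Icc k (2*k-1), i = k*(3*k-1) := by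
  rw [sum_Icc_two k (2*k-1) (by omega)]
  have e1 : k + (2*k-1) = 3*k-1 := by omega
  have e2 : 2*k-1+1-k = k := by omega
  rw [e1, e2, Nat.mul_comm]

lemma sum_exc_B (k : ℕ) (hk : 1 ≤ k) :
    2 * ∑ i ∈ Finset.Icc (k+1) (2*k), i = k*(3*k+1) := by
  rw [sum_Icc_two (k+1) (2*k) (by omega)]
  have e1 : k+1 + 2*k = 3*k+1 := by omega
  have e2 : 2*k+1-(k+1) = k := by omega
  rw [e1, e2, Nat.mul_comm]

lemma zero_not_mem_IccA (k : ℕ) (hk : 1 ≤ k) : (0:ℕ) ∉ Finset.Icc k (2*k-1) := by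
  rw [Finset.mem_Icc]; omega

lemma exc_card (N : ℕ) (hN : 0 < N) :
    (((Eset N).filter Exc).card) = if PentN N then 1 else 0 := by
  by_cases hp : PentN N
  · rw [if_pos hp]
    obtain ⟨k, hk | hk⟩ := hp
    · have hk1 : 1 ≤ k := by
        rcases Nat.eq_zero_or_pos k with rfl | h
        · omega
        · exact h
      rw [Finset.card_eq_one]
      refine ⟨Finset.Icc k (2*k-1), ?_⟩
      rw [Finset.eq_singleton_iff_unique_mem]
      constructor
      · rw [Finset.mem_filter, mem_Eset]
        refine ⟨⟨zero_not_mem_IccA k hk1, ?_⟩, ⟨k, hk1, Or.inl rfl⟩⟩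
        have := sum_exc_A k hk1
        omega
      · intro t ht
        rw [Finset.mem_filter, mem_Eset] at ht
        obtain ⟨⟨h0, hsum⟩, k', hk', hA | hB⟩ := ht
        · rw [hA] at hsum
          have := sum_exc_A k' hk'
          have heq : k'*(3*k'-1) = k*(3*k-1) := by omega
          rw [hA, pentA_inj k' k heq]
        · exfalso
          rw [hB] at hsum
          have := sum_exc_B k' hk'
          have heq : k*(3*k-1) = k'*(3*k'+1) := by omega
          exact pent_cross k k' hk1 hk' heq
    · have hk1 : 1 ≤ k := by
        rcases Nat.eq_zero_or_pos k with rfl | h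
        · omega
        · exact h
      rw [Finset.card_eq_one]
      refine ⟨Finset.Icc (k+1) (2*k), ?_⟩
      rw [Finset.eq_singleton_iff_unique_mem]
      constructor
      · rw [Finset.mem_filter, mem_Eset]
        refine ⟨⟨by rw [Finset.mem_Icc]; omega, ?_⟩, ⟨k, hk1, Or.inr rfl⟩⟩
        have := sum_exc_B k hk1
        omega
      · intro t ht
        rw [Finset.mem_filter, mem_Eset] at ht
        obtain ⟨⟨h0, hsum⟩, k', hk', hA | hB⟩ := ht
        · exfalso
          rw [hA] at hsum
          have := sum_exc_A k' hk'
          have heq : k'*(3*k'-1) = k*(3*k+1) := by omega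
          exact pent_cross k' k hk' hk1 heq
        · rw [hB] at hsum
          have := sum_exc_B k' hk'
          have heq : k'*(3*k'+1) = k*(3*k+1) := by omega
          rw [hB, pentB_inj k' k heq]
  · rw [if_neg hp]
    rw [Finset.card_eq_zero, Finset.eq_empty_iff_forall_notMem]
    intro t ht
    rw [Finset.mem_filter, mem_Eset] at ht
    obtain ⟨⟨h0, hsum⟩, k', hk', hA | hB⟩ := ht
    · rw [hA] at hsum
      have := sum_exc_A k' hk'
      exact hp ⟨k', Or.inl (by omega)⟩
    · rw [hB] at hsum
      have := sum_exc_B k' hk'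
      exact hp ⟨k', Or.inr (by omega)⟩

lemma franklin_parity (N : ℕ) :
    (((Eset N).card : ZMod 2)) = if PentN N then 1 else 0 := by
  rcases Nat.eq_zero_or_pos N with rfl | hN
  · have h1 : Eset 0 = {∅} := by
      ext t
      rw [mem_Eset, Finset.mem_singleton]
      constructor
      · rintro ⟨h0, hsum⟩
        by_contra hne
        obtain ⟨x, hx⟩ := Finset.nonempty_iff_ne_empty.mpr hne
        have hx1 : 1 ≤ x := by
          rcases Nat.eq_zero_or_pos x with rfl | h
          · exact absurd hx h0
          · exact h
        have : x ≤ ∑ i ∈ t, i := by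
          calc x = id x := rfl
            _ ≤ ∑ i ∈ t, i := Finset.single_le_sum (fun i _ => Nat.zero_le _) hx
        omega
      · rintro rfl; simp
    rw [h1, if_pos ⟨0, by omega⟩]
    simp
  -- N ≥ 1
  have hsplit := Finset.card_filter_add_card_filter_not
    (s := Eset N) (p := Exc)
  -- non-exceptional part sums to zero mod 2
  have hnonexc : ((((Eset N).filter (fun t => ¬ Exc t)).card : ZMod 2)) = 0 := by
    have : ∑ _t ∈ (Eset N).filter (fun t => ¬ Exc t), (1 : ZMod 2) = 0 := by
      apply Finset.sum_involution (g := fun t _ => frk t)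
      · intro a ha; decide
      · intro a ha _
        rw [Finset.mem_filter, mem_Eset] at ha
        obtain ⟨⟨h0, hsum⟩, hexc⟩ := ha
        have hne : a.Nonempty := by
          rw [Finset.nonempty_iff_ne_empty]
          rintro rfl
          simp at hsum
          omega
        by_cases hsl : Mn a ≤ SL a
        · exact (caseA a h0 hne hexc hsl).2.2.2.2.2
        · exact (caseB a h0 hne hexc hsl).2.2.2.2.2
      · intro a ha
        rw [Finset.mem_filter, mem_Eset] at ha ⊢
        obtain ⟨⟨h0, hsum⟩, hexc⟩ := ha
        have hne : a.Nonempty := by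
          rw [Finset.nonempty_iff_ne_empty]
          rintro rfl
          simp at hsum
          omega
        by_cases hsl : Mn a ≤ SL a
        · obtain ⟨u0, une, usum, unexc, _, _⟩ := caseA a h0 hne hexc hsl
          exact ⟨⟨u0, by rw [usum]; exact hsum⟩, unexc⟩
        · obtain ⟨u0, une, usum, unexc, _, _⟩ := caseB a h0 hne hexc hsl
          exact ⟨⟨u0, by rw [usum]; exact hsum⟩, unexc⟩
      · intro a ha
        rw [Finset.mem_filter, mem_Eset] at ha
        obtain ⟨⟨h0, hsum⟩, hexc⟩ := ha
        have hne : a.Nonempty := by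
          rw [Finset.nonempty_iff_ne_empty]
          rintro rfl
          simp at hsum
          omega
        by_cases hsl : Mn a ≤ SL a
        · exact (caseA a h0 hne hexc hsl).2.2.2.2.1
        · exact (caseB a h0 hne hexc hsl).2.2.2.2.1
    simpa using this
  -- exceptional part
  have hexcpart : (((Eset N).filter Exc).card) = if PentN N then 1 else 0 :=
    exc_card N hN
  have : ((Eset N).card : ZMod 2)
      = (((Eset N).filter Exc).card : ZMod 2) + (((Eset N).filter (fun t => ¬ Exc t)).card : ZMod 2) := by
    rw [← Nat.cast_add, hsplit]
  rw [this, hnonexc, add_zero, hexcpart]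
  split <;> simp

lemma zmod2_add_self (x : ZMod 2) : x + x = 0 := by revert x; decide
lemma zmod2_mul_self (x : ZMod 2) : x * x = x := by revert x; decide
lemma zmod2_eq_zero_or_one (x : ZMod 2) : x = 0 ∨ x = 1 := by revert x; decide

lemma int_odd_iff_cast (z : ℤ) : Odd z ↔ ((z : ZMod 2) = 1) := by
  constructor
  · intro h
    rcases zmod2_eq_zero_or_one (z : ZMod 2) with h0 | h1
    · exfalso
      rw [ZMod.intCast_zmod_eq_zero_iff_dvd] at h0
      rw [Int.odd_iff] at h
      omega
    · exact h1
  · intro h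
    rw [Int.odd_iff]
    by_contra hcon
    have h2 : ((2:ℕ):ℤ) ∣ z := by push_cast; omega
    rw [← ZMod.intCast_zmod_eq_zero_iff_dvd] at h2
    rw [h] at h2
    exact one_ne_zero h2

lemma natCast_zmod2 (c : ℕ) : (c : ZMod 2) = if Odd c then 1 else 0 := by
  conv_lhs => rw [← ZMod.natCast_mod c 2]
  simp only [Nat.odd_iff]
  rcases Nat.mod_two_eq_zero_or_one c with h | h <;> rw [h] <;> simp

lemma sum_pair_cancel {s : Finset (ℕ×ℕ)} (f : ℕ×ℕ → ZMod 2)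
    (hswap_mem : ∀ p ∈ s, p.swap ∈ s) (hne : ∀ p ∈ s, p.swap ≠ p)
    (hf : ∀ p, f p.swap = f p) : ∑ p ∈ s, f p = 0 :=
  Finset.sum_involution (fun p _ => p.swap)
    (fun p _ => by rw [hf]; exact zmod2_add_self _)
    (fun p hp _ => hne p hp)
    (fun p hp => hswap_mem p hp)
    (fun p hp => Prod.swap_swap p)

/-- squaring a power series over `ZMod 2` doubles exponents -/
lemma coeff_sq_zmod2 (g : PowerSeries (ZMod 2)) (n : ℕ) :
    PowerSeries.coeff n (g^2)
      = if 2 ∣ n then PowerSeries.coeff (n/2) g else 0 := by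
  rw [pow_two, PowerSeries.coeff_mul]
  by_cases h2 : 2 ∣ n
  · obtain ⟨m, rfl⟩ := h2
    rw [if_pos ⟨m, rfl⟩]
    have hmem : ((m, m) : ℕ × ℕ) ∈ Finset.HasAntidiagonal.antidiagonal (2*m) := by
      rw [Finset.HasAntidiagonal.mem_antidiagonal]; omega
    rw [← Finset.add_sum_erase _ _ hmem]
    have hzero : ∑ p ∈ (Finset.HasAntidiagonal.antidiagonal (2*m)).erase (m, m),
        PowerSeries.coeff p.1 g * PowerSeries.coeff p.2 g = 0 := by
      apply sum_pair_cancel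
      · intro p hp
        rw [Finset.mem_erase, Finset.HasAntidiagonal.mem_antidiagonal] at hp ⊢
        refine ⟨fun hcon => hp.1 ?_, by simp only [Prod.fst_swap, Prod.snd_swap]; omega⟩
        have h1 : p.1 = m := by
          have := congrArg Prod.snd hcon; simpa using this
        have h2 : p.2 = m := by
          have := congrArg Prod.fst hcon; simpa using this
        ext
        · simpa using h1
        · simpa using h2
      · intro p hp hcon
        rw [Finset.mem_erase, Finset.HasAntidiagonal.mem_antidiagonal] at hp
        apply hp.1
        have h1 : p.2 = p.1 := by
          have := congrArg Prod.fst hcon; simpa using this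
        have h2 : p.1 = m := by omega
        ext
        · simpa using h2
        · simp; omega
      · intro p
        simp [mul_comm]
    rw [hzero, add_zero]
    have : (2*m)/2 = m := by omega
    rw [this]
    exact zmod2_mul_self _
  · rw [if_neg h2]
    apply sum_pair_cancel
    · intro p hp
      rw [Finset.HasAntidiagonal.mem_antidiagonal] at hp ⊢
      simp only [Prod.fst_swap, Prod.snd_swap]
      omega
    · intro p hp hcon
      rw [Finset.HasAntidiagonal.mem_antidiagonal] at hp
      have h1 : p.2 = p.1 := by
        have := congrArg Prod.fst hcon; simpa using this
      omega
    · intro p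
      simp [mul_comm]

lemma coeff_pow_two_pow (g : PowerSeries (ZMod 2)) (d n : ℕ) :
    PowerSeries.coeff n (g^(2^d))
      = if 2^d ∣ n then PowerSeries.coeff (n/2^d) g else 0 := by
  induction d generalizing n with
  | zero => simp
  | succ d ih =>
    have e : g^(2^(d+1)) = (g^(2^d))^2 := by
      rw [← pow_mul, pow_succ]
    rw [e, coeff_sq_zmod2]
    by_cases h2 : 2 ∣ n
    · rw [if_pos h2, ih]
      obtain ⟨m, rfl⟩ := h2
      have e2 : 2*m/2 = m := by omega
      rw [e2]
      by_cases hd : 2^d ∣ m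
      · obtain ⟨c, rfl⟩ := hd
        rw [if_pos ⟨c, rfl⟩, if_pos ⟨c, by rw [pow_succ]; ring⟩]
        congr 1
        have h1 : 2^d * c / 2^d = c := Nat.mul_div_cancel_left c (pow_pos (by norm_num) d)
        have h2 : 2 * (2^d * c) / (2^(d+1)) = c := by
          rw [show 2 * (2^d * c) = (2^(d+1)) * c by rw [pow_succ]; ring]
          exact Nat.mul_div_cancel_left c (by positivity)
        rw [h1, h2]
      · rw [if_neg hd, if_neg ?_]
        intro ⟨c, hc⟩
        apply hd
        refine ⟨c, ?_⟩
        have : 2^(d+1)*c = 2*(2^d*c) := by rw [pow_succ]; ring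
        omega
    · rw [if_neg h2, if_neg ?_]
      intro hcon
      apply h2
      exact dvd_trans ⟨2^d, by rw [pow_succ]; ring⟩ hcon
section T5
open PowerSeries
lemma zmod2_neg (x : ZMod 2) : -x = x := by revert x; decide

lemma coeff_fEta_map (a n : ℕ) (ha : 0 < a) :
    PowerSeries.coeff n (PowerSeries.map (Int.castRingHom (ZMod 2)) (fEta a))
      = if (∃ p, PentN p ∧ n = a * p) then 1 else 0 := by
  rw [PowerSeries.coeff_map, fEta, PowerSeries.coeff_mk, ← PowerSeries.coeff_map]
  have hmap : PowerSeries.map (Int.castRingHom (ZMod 2))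
        (∏ i ∈ Finset.Icc 1 (n+1), (1 - (PowerSeries.X : PowerSeries ℤ)^(a*i)))
      = ∏ i ∈ Finset.Icc 1 (n+1), ((PowerSeries.X : PowerSeries (ZMod 2))^(a*i) + 1) := by
    rw [map_prod]
    apply Finset.prod_congr rfl
    intro i _
    rw [map_sub, map_one, map_pow, PowerSeries.map_X]
    have hneg : -(PowerSeries.X : PowerSeries (ZMod 2))^(a*i)
        = (PowerSeries.X : PowerSeries (ZMod 2))^(a*i) := by
      ext k
      rw [map_neg]
      exact zmod2_neg _
    rw [sub_eq_add_neg, hneg, add_comm]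
  rw [hmap, Finset.prod_add]
  simp only [Finset.prod_const_one, mul_one]
  have hXpow : ∀ t : Finset ℕ,
      (∏ i ∈ t, (PowerSeries.X : PowerSeries (ZMod 2))^(a*i))
        = (PowerSeries.X : PowerSeries (ZMod 2))^(a * ∑ i ∈ t, i) := by
    intro t
    rw [Finset.prod_pow_eq_pow_sum, Finset.mul_sum]
  rw [Finset.sum_congr rfl (fun t _ => hXpow t)]
  rw [map_sum]
  simp only [PowerSeries.coeff_X_pow]
  rw [Finset.sum_boole]
  by_cases hdvd : a ∣ n
  · obtain ⟨N, rfl⟩ := hdvd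
    have hset : (Finset.Icc 1 (a*N+1)).powerset.filter (fun t => a*N = a * ∑ i ∈ t, i)
        = Eset N := by
      ext t
      rw [Finset.mem_filter, Finset.mem_powerset, mem_Eset]
      constructor
      · rintro ⟨hsub, hsum⟩
        have hsN : ∑ i ∈ t, i = N := by
          have := Nat.eq_of_mul_eq_mul_left ha hsum.symm
          omega
        refine ⟨fun hcon => ?_, hsN⟩
        have := hsub hcon
        rw [Finset.mem_Icc] at this
        omega
      · rintro ⟨h0, hsum⟩
        constructor
        · intro x hx
          rw [Finset.mem_Icc]
          have hx1 : 1 ≤ x := by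
            rcases Nat.eq_zero_or_pos x with rfl | h
            · exact absurd hx h0
            · exact h
          have hx2 : x ≤ ∑ i ∈ t, i :=
            Finset.single_le_sum (f := id) (fun i _ => Nat.zero_le _) hx
          have hNa : N ≤ a*N := Nat.le_mul_of_pos_left N ha
          exact ⟨hx1, by omega⟩
        · rw [hsum]
    rw [hset, franklin_parity N]
    congr 1
    rw [eq_iff_iff]
    constructor
    · intro h; exact ⟨N, h, rfl⟩
    · rintro ⟨p, hp, he⟩
      have : p = N := by
        have := Nat.eq_of_mul_eq_mul_left ha he.symm
        omega
      rwa [this] at hp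
  · have hempty : (Finset.Icc 1 (n+1)).powerset.filter (fun t => n = a * ∑ i ∈ t, i)
        = ∅ := by
      rw [Finset.eq_empty_iff_forall_notMem]
      intro t ht
      rw [Finset.mem_filter] at ht
      exact hdvd ⟨_, ht.2⟩
    rw [hempty]
    rw [if_neg (fun ⟨p, _, he⟩ => hdvd ⟨p, he⟩)]
    simp
end T5
section T6
open PowerSeries Finset

lemma coeff_G (a d i : ℕ) (ha : 0 < a) :
    PowerSeries.coeff i
        ((PowerSeries.map (Int.castRingHom (ZMod 2)) (fEta a))^(2^d))
      = if (∃ m, i = (2^d * a) * wpent m) then 1 else 0 := by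
  rw [coeff_pow_two_pow]
  have hpow : 0 < 2^d := pow_pos (by norm_num) d
  by_cases h2 : 2^d ∣ i
  · rw [if_pos h2, coeff_fEta_map a _ ha]
    obtain ⟨j, rfl⟩ := h2
    rw [Nat.mul_div_cancel_left j hpow]
    congr 1
    rw [eq_iff_iff]
    constructor
    · rintro ⟨p, hp, rfl⟩
      obtain ⟨m, rfl⟩ := (pent_iff_wpent p).mp hp
      exact ⟨m, by ring⟩
    · rintro ⟨m, hm⟩
      refine ⟨wpent m, (pent_iff_wpent _).mpr ⟨m, rfl⟩, ?_⟩
      have he : 2^d * (a * wpent m) = 2^d * a * wpent m := by ring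
      apply Nat.eq_of_mul_eq_mul_left hpow
      rw [he, ← hm]
  · rw [if_neg h2, if_neg]
    rintro ⟨m, rfl⟩
    exact h2 ⟨a * wpent m, by ring⟩

/-- number of indices m with 2^d * wpent m ≤ N -/
noncomputable def pcount (d N : ℕ) : ℕ :=
  ((Finset.range (N+1)).filter (fun m => 2^d * wpent m ≤ N)).card

lemma coeff_F (a d n : ℕ) (ha : 0 < a) :
    PowerSeries.coeff n
        (PowerSeries.map (Int.castRingHom (ZMod 2)) (fEta a ^ (2^d) * geomA a))
      = if a ∣ n ∧ Odd (pcount d (n/a)) then 1 else 0 := by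
  have hpow : 0 < 2^d := pow_pos (by norm_num) d
  rw [map_mul, map_pow, PowerSeries.coeff_mul]
  have hgeom : ∀ j, PowerSeries.coeff j
      (PowerSeries.map (Int.castRingHom (ZMod 2)) (geomA a)) = if a ∣ j then 1 else 0 := by
    intro j
    rw [PowerSeries.coeff_map, geomA, PowerSeries.coeff_mk]
    split <;> simp
  rw [Finset.Nat.sum_antidiagonal_eq_sum_range_succ_mk]
  simp only [coeff_G a d _ ha, hgeom]
  by_cases hdvd : a ∣ n
  · obtain ⟨N, rfl⟩ := hdvd
    have hterm : ∀ k ∈ Finset.range (a*N+1),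
        (if (∃ m, k = (2^d * a) * wpent m) then (1:ZMod 2) else 0)
          * (if a ∣ a*N - k then 1 else 0)
        = (if (∃ m, k = (2^d * a) * wpent m) then 1 else 0) := by
      intro k hk
      by_cases hex : ∃ m, k = (2^d * a) * wpent m
      · obtain ⟨m, rfl⟩ := hex
        rw [if_pos ⟨m, rfl⟩, if_pos, mul_one]
        apply Nat.dvd_sub
        · exact ⟨N, rfl⟩
        · exact ⟨2^d * wpent m, by ring⟩
      · rw [if_neg hex, zero_mul]
    rw [Finset.sum_congr rfl hterm, Finset.sum_boole]
    have hcard : pcount d N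
        = ((Finset.range (a*N+1)).filter (fun k => ∃ m, k = (2^d * a) * wpent m)).card := by
      rw [pcount]
      apply Finset.card_bij (i := fun m _ => (2^d*a) * wpent m)
      · intro m hm
        rw [Finset.mem_filter, Finset.mem_range] at hm ⊢
        refine ⟨?_, ⟨m, rfl⟩⟩
        have he : 2^d * a * wpent m = a * (2^d * wpent m) := by ring
        have hle := Nat.mul_le_mul_left a hm.2
        omega
      · intro m1 h1 m2 h2 he
        have := Nat.eq_of_mul_eq_mul_left (show 0 < 2^d*a by positivity) he
        exact wpent_strictMono.injective this
      · intro k hk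
        rw [Finset.mem_filter, Finset.mem_range] at hk
        obtain ⟨hklt, m, rfl⟩ := hk
        refine ⟨m, ?_, rfl⟩
        rw [Finset.mem_filter, Finset.mem_range]
        have he : 2^d * a * wpent m = a * (2^d * wpent m) := by ring
        have h1 : a * (2^d * wpent m) ≤ a * N := by omega
        have h2 : 2^d * wpent m ≤ N := Nat.le_of_mul_le_mul_left h1 ha
        have h3 : m ≤ wpent m := self_le_wpent m
        have h4 : wpent m ≤ 2^d * wpent m := Nat.le_mul_of_pos_left _ hpow
        exact ⟨by omega, h2⟩
    rw [← hcard, natCast_zmod2]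
    have hdivN : a*N/a = N := Nat.mul_div_cancel_left N ha
    rw [hdivN]
    by_cases hodd : Odd (pcount d N)
    · rw [if_pos hodd, if_pos ⟨⟨N, rfl⟩, hodd⟩]
    · rw [if_neg hodd, if_neg (fun h => hodd h.2)]
  · rw [if_neg (fun h => hdvd h.1)]
    apply Finset.sum_eq_zero
    intro k hk
    rw [Finset.mem_range] at hk
    by_cases hex : ∃ m, k = (2^d * a) * wpent m
    · rw [if_pos hex, one_mul, if_neg]
      intro hsub
      apply hdvd
      obtain ⟨m, rfl⟩ := hex
      have h1 : a ∣ 2^d * a * wpent m := ⟨2^d * wpent m, by ring⟩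
      have h2 : n = (n - 2^d * a * wpent m) + 2^d * a * wpent m := by omega
      rw [h2]
      exact Nat.dvd_add hsub h1
    · rw [if_neg hex, zero_mul]
end T6
section T7
open Finset

lemma odd_coeff_iff (a d n : ℕ) (ha : 0 < a) :
    Odd (PowerSeries.coeff n (fEta a ^ (2^d) * geomA a))
      ↔ (a ∣ n ∧ Odd (pcount d (n/a))) := by
  rw [int_odd_iff_cast]
  have hc : ((PowerSeries.coeff n (fEta a ^ 2^d * geomA a) : ℤ) : ZMod 2)
      = PowerSeries.coeff n
          (PowerSeries.map (Int.castRingHom (ZMod 2)) (fEta a ^ (2^d) * geomA a)) := by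
    rw [PowerSeries.coeff_map]
    simp
  rw [hc, coeff_F a d n ha]
  by_cases h : a ∣ n ∧ Odd (pcount d (n/a))
  · simp [h]
  · simp only [if_neg h]
    constructor
    · intro h0; exact absurd h0.symm one_ne_zero
    · intro h1; exact absurd h1 h


lemma wpent_zero : wpent 0 = 0 := rfl

/-- scaled pentagonal numbers -/
noncomputable def vd (d m : ℕ) : ℕ := 2^d * wpent m

lemma vd_strictMono (d : ℕ) : StrictMono (vd d) := fun _ _ h =>
  (Nat.mul_lt_mul_left (pow_pos (by norm_num) d)).mpr (wpent_strictMono h)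

lemma vd_mono (d : ℕ) : Monotone (vd d) := (vd_strictMono d).monotone

lemma self_le_vd (d m : ℕ) : m ≤ vd d m :=
  le_trans (self_le_wpent m) (Nat.le_mul_of_pos_left _ (pow_pos (by norm_num) d))

lemma vd_zero (d : ℕ) : vd d 0 = 0 := by simp [vd, wpent_zero]

/-- number of odd-parity degrees up to Y -/
noncomputable def Dcnt (d Y : ℕ) : ℕ :=
  ((Finset.range (Y+1)).filter (fun N => Odd (pcount d N))).card

/-- index of the last even-indexed scaled pentagonal number ≤ Y -/
noncomputable def Jof (d Y : ℕ) : ℕ := Nat.findGreatest (fun j => vd d (2*j) ≤ Y) Y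

lemma Jof_spec (d Y : ℕ) : vd d (2 * Jof d Y) ≤ Y :=
  Nat.findGreatest_spec (P := fun j => vd d (2*j) ≤ Y) (Nat.zero_le Y)
    (by simpa [vd_zero] using Nat.zero_le Y)

lemma le_Jof {d Y j : ℕ} (h : vd d (2*j) ≤ Y) : j ≤ Jof d Y :=
  Nat.le_findGreatest (le_trans (le_trans (by omega) (self_le_vd d (2*j))) h) h

lemma Jof_lt (d Y : ℕ) : Y < vd d (2 * (Jof d Y) + 2) := by
  by_contra hcon
  push_neg at hcon
  have h2 : vd d (2*(Jof d Y + 1)) ≤ Y := by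
    rw [show 2*(Jof d Y + 1) = 2*Jof d Y + 2 by ring]
    exact hcon
  have := le_Jof h2
  omega

lemma pcount_eq (d N : ℕ) :
    pcount d N = Nat.findGreatest (fun m => vd d m ≤ N) N + 1 := by
  set r := Nat.findGreatest (fun m => vd d m ≤ N) N with hr
  have hPr : vd d r ≤ N := Nat.findGreatest_spec (P := fun m => vd d m ≤ N)
    (Nat.zero_le N) (by simpa [vd_zero] using Nat.zero_le N)
  have hfilter : (Finset.range (N+1)).filter (fun m => 2^d * wpent m ≤ N)
      = Finset.range (r+1) := by
    ext x
    rw [Finset.mem_filter, Finset.mem_range, Finset.mem_range]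
    constructor
    · rintro ⟨hx, hvx⟩
      have hvx' : vd d x ≤ N := hvx
      have : x ≤ r := Nat.le_findGreatest (by
        have := le_trans (self_le_vd d x) hvx'
        omega) hvx'
      omega
    · intro hx
      have h1 : vd d x ≤ vd d r := vd_mono d (by omega)
      have h2 : r ≤ N := Nat.findGreatest_le N
      exact ⟨by omega, le_trans h1 hPr⟩
  rw [pcount, hfilter, Finset.card_range]

lemma oddAt_iff (d N : ℕ) :
    Odd (pcount d N) ↔ (vd d (2 * Jof d N) ≤ N ∧ N < vd d (2 * Jof d N + 1)) := by
  set r := Nat.findGreatest (fun m => vd d m ≤ N) N with hr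
  set J := Jof d N with hJ
  have hPr : vd d r ≤ N := Nat.findGreatest_spec (P := fun m => vd d m ≤ N)
    (Nat.zero_le N) (by simpa [vd_zero] using Nat.zero_le N)
  have hPJ : vd d (2*J) ≤ N := Jof_spec d N
  have h2Jr : 2*J ≤ r :=
    Nat.le_findGreatest (le_trans (self_le_vd d (2*J)) hPJ) hPJ
  have hr2J : r ≤ 2*J + 1 := by
    by_contra hcon
    push_neg at hcon
    have hvr : vd d (2*(J+1)) ≤ N := le_trans (vd_mono d (by omega)) hPr
    have := le_Jof hvr
    omega
  rw [pcount_eq, ← hr]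
  constructor
  · intro hodd
    rw [Nat.odd_iff] at hodd
    refine ⟨hPJ, ?_⟩
    by_contra hcon
    push_neg at hcon
    have : 2*J+1 ≤ r :=
      Nat.le_findGreatest (le_trans (self_le_vd d (2*J+1)) hcon) hcon
    omega
  · rintro ⟨h1, h2⟩
    have : r ≤ 2*J := by
      by_contra hcon
      push_neg at hcon
      have hre : r = 2*J+1 := by omega
      rw [hre] at hPr
      omega
    rw [Nat.odd_iff]
    omega
end T7
section T8
open Finset

lemma vd_gap (d j : ℕ) : vd d (2*j+1) = vd d (2*j) + 2^d * (2*j+1) := by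
  have h1 := (wpent_closed j).1
  have h2 := (wpent_closed j).2
  have e : wpent (2*j+1) = wpent (2*j) + (2*j+1) := by
    have : (j+1)*(3*j+2) = j*(3*j+1) + 2*(2*j+1) := by ring
    omega
  rw [vd, vd, e, Nat.mul_add]

lemma vd_even_closed (d j : ℕ) : 2 * vd d (2*j) = 2^d * (j*(3*j+1)) := by
  rw [vd, show 2*(2^d*wpent (2*j)) = 2^d*(2*wpent (2*j)) by ring, (wpent_closed j).1]

lemma sum_odds (J : ℕ) : ∑ j ∈ Finset.range J, (2*j+1) = J^2 := by
  induction J with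
  | zero => simp
  | succ J ih =>
    rw [Finset.sum_range_succ, ih]
    ring

lemma oddAt_of_interval {d N j : ℕ} (h1 : vd d (2*j) ≤ N) (h2 : N < vd d (2*j+1)) :
    Odd (pcount d N) := by
  have hj1 : j ≤ Jof d N := le_Jof h1
  have hj2 : Jof d N ≤ j := by
    by_contra hcon
    push_neg at hcon
    have hm1 : vd d (2*j+1) ≤ vd d (2*Jof d N) := vd_mono d (by omega)
    have := Jof_spec d N
    omega
  have he : Jof d N = j := le_antisymm hj2 hj1
  rw [oddAt_iff, he]
  exact ⟨h1, h2⟩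

lemma Dcnt_lower (d Y : ℕ) : 2^d * (Jof d Y)^2 ≤ Dcnt d Y := by
  set J := Jof d Y with hJ
  set B := (Finset.range J).biUnion (fun j => Finset.Ico (vd d (2*j)) (vd d (2*j+1))) with hB
  have hsub : B ⊆ (Finset.range (Y+1)).filter (fun N => Odd (pcount d N)) := by
    intro N hN
    rw [hB, Finset.mem_biUnion] at hN
    obtain ⟨j, hj, hN⟩ := hN
    rw [Finset.mem_range] at hj
    rw [Finset.mem_Ico] at hN
    rw [Finset.mem_filter, Finset.mem_range]
    constructor
    · have hm : vd d (2*j+1) ≤ vd d (2*J) := vd_mono d (by omega)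
      have hs := Jof_spec d Y
      rw [← hJ] at hs
      omega
    · exact oddAt_of_interval hN.1 hN.2
  have hdisj : (↑(Finset.range J) : Set ℕ).PairwiseDisjoint
      (fun j => Finset.Ico (vd d (2*j)) (vd d (2*j+1))) := by
    intro j _ k _ hjk
    simp only [Function.onFun]
    rw [Finset.disjoint_left]
    intro x hx1 hx2
    rw [Finset.mem_Ico] at hx1 hx2
    rcases lt_or_gt_of_ne hjk with h | h
    · have : vd d (2*j+1) ≤ vd d (2*k) := vd_mono d (by omega)
      omega
    · have : vd d (2*k+1) ≤ vd d (2*j) := vd_mono d (by omega)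
      omega
  have hcard : B.card = 2^d * J^2 := by
    rw [hB, Finset.card_biUnion hdisj]
    have : ∀ j ∈ Finset.range J,
        (Finset.Ico (vd d (2*j)) (vd d (2*j+1))).card = 2^d * (2*j+1) := by
      intro j _
      rw [Nat.card_Ico, vd_gap]
      omega
    rw [Finset.sum_congr rfl this, ← Finset.mul_sum, sum_odds]
  calc 2^d * J^2 = B.card := hcard.symm
    _ ≤ _ := Finset.card_le_card hsub

lemma Dcnt_upper (d Y : ℕ) : Dcnt d Y ≤ 2^d * (Jof d Y + 1)^2 := by
  set J := Jof d Y with hJ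
  have hsub : (Finset.range (Y+1)).filter (fun N => Odd (pcount d N))
      ⊆ (Finset.range (J+1)).biUnion (fun j => Finset.Ico (vd d (2*j)) (vd d (2*j+1))) := by
    intro N hN
    rw [Finset.mem_filter, Finset.mem_range] at hN
    obtain ⟨hNY, hodd⟩ := hN
    rw [oddAt_iff] at hodd
    rw [Finset.mem_biUnion]
    refine ⟨Jof d N, ?_, ?_⟩
    · rw [Finset.mem_range]
      have : Jof d N ≤ J := le_Jof (le_trans hodd.1 (by omega))
      omega
    · rw [Finset.mem_Ico]
      exact hodd
  calc Dcnt d Y ≤ ((Finset.range (J+1)).biUnion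
        (fun j => Finset.Ico (vd d (2*j)) (vd d (2*j+1)))).card :=
        Finset.card_le_card hsub
    _ ≤ ∑ j ∈ Finset.range (J+1), (Finset.Ico (vd d (2*j)) (vd d (2*j+1))).card :=
        Finset.card_biUnion_le
    _ = 2^d * (J+1)^2 := by
        have : ∀ j ∈ Finset.range (J+1),
            (Finset.Ico (vd d (2*j)) (vd d (2*j+1))).card = 2^d * (2*j+1) := by
          intro j _
          rw [Nat.card_Ico, vd_gap]
          omega
        rw [Finset.sum_congr rfl this, ← Finset.mul_sum, sum_odds]
end T8
section T9
open Finset Filter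

lemma oddCount_eq (a d x : ℕ) (ha : 0 < a) :
    oddCount (fEta a ^ (2^d) * geomA a) x = Dcnt d (x/a) := by
  rw [oddCount, Dcnt]
  have hfe : (Finset.range (x+1)).filter
        (fun n => Odd (PowerSeries.coeff n (fEta a ^ (2^d) * geomA a)))
      = (Finset.range (x+1)).filter (fun n => a ∣ n ∧ Odd (pcount d (n/a))) :=
    Finset.filter_congr (fun n _ => by rw [odd_coeff_iff a d n ha])
  rw [hfe]
  symm
  apply Finset.card_bij (i := fun N _ => a * N)
  · intro N hN
    rw [Finset.mem_filter, Finset.mem_range] at hN ⊢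
    obtain ⟨hNle, hodd⟩ := hN
    have h1 : N ≤ x/a := by omega
    have h2 : a * N ≤ x := by
      calc a*N ≤ a*(x/a) := Nat.mul_le_mul_left a h1
        _ = (x/a)*a := Nat.mul_comm _ _
        _ ≤ x := Nat.div_mul_le_self x a
    refine ⟨by omega, ⟨N, rfl⟩, ?_⟩
    rw [Nat.mul_div_cancel_left N ha]
    exact hodd
  · intro N1 h1 N2 h2 he
    exact Nat.eq_of_mul_eq_mul_left ha he
  · intro n hn
    rw [Finset.mem_filter, Finset.mem_range] at hn
    obtain ⟨hnle, ⟨N, rfl⟩, hodd⟩ := hn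
    refine ⟨N, ?_, rfl⟩
    rw [Finset.mem_filter, Finset.mem_range]
    rw [Nat.mul_div_cancel_left N ha] at hodd
    refine ⟨?_, hodd⟩
    have : N ≤ x / a := (Nat.le_div_iff_mul_le ha).mpr (by rw [Nat.mul_comm]; omega)
    omega

lemma tendsto_div_const_atTop (a : ℕ) (ha : 0 < a) :
    Tendsto (fun x : ℕ => x / a) atTop atTop := by
  rw [Filter.tendsto_atTop_atTop]
  intro b
  exact ⟨a * b, fun x hx => (Nat.le_div_iff_mul_le ha).mpr (by rw [Nat.mul_comm]; omega)⟩

lemma tendsto_Jof (d : ℕ) : Tendsto (Jof d) atTop atTop := by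
  rw [Filter.tendsto_atTop_atTop]
  intro K
  exact ⟨vd d (2*K), fun Y hY => le_Jof hY⟩

lemma limU (a : ℕ) (ha : 0 < a) :
    Tendsto (fun j : ℕ => (2*((j:ℝ)+1)^2)/(a * (j*(3*j+1)))) atTop
      (nhds (2/(3*(a:ℝ)))) := by
  have ha' : (a:ℝ) ≠ 0 := Nat.cast_ne_zero.mpr (by omega)
  have h0 : Tendsto (fun j : ℕ => (1:ℝ)/j) atTop (nhds 0) :=
    tendsto_one_div_atTop_nhds_zero_nat
  have hnum : Tendsto (fun j : ℕ => (1+1/(j:ℝ))^2 * (2/a)) atTop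
      (nhds ((1+0)^2 * (2/(a:ℝ)))) :=
    ((tendsto_const_nhds.add h0).pow 2).mul tendsto_const_nhds
  have hden : Tendsto (fun j : ℕ => (3:ℝ) + 1/(j:ℝ)) atTop (nhds (3+0)) :=
    tendsto_const_nhds.add h0
  have hq := hnum.div hden (by norm_num)
  have hconst : ((1+0:ℝ)^2 * (2/(a:ℝ)))/(3+0) = 2/(3*a) := by
    field_simp
    ring
  rw [hconst] at hq
  apply hq.congr'
  rw [Filter.eventuallyEq_iff_exists_mem]
  refine ⟨{j | 1 ≤ j}, Filter.mem_atTop 1, ?_⟩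
  intro j hj
  have hj' : (0:ℝ) < (j:ℝ) := by
    have : (1:ℕ) ≤ j := hj
    exact_mod_cast Nat.lt_of_lt_of_le Nat.zero_lt_one this
  simp only [Pi.div_apply]
  field_simp

lemma limL (a : ℕ) (ha : 0 < a) :
    Tendsto (fun j : ℕ => (2*(j:ℝ)^2)/(a * ((j+1)*(3*j+4)))) atTop
      (nhds (2/(3*(a:ℝ)))) := by
  have ha' : (a:ℝ) ≠ 0 := Nat.cast_ne_zero.mpr (by omega)
  have h0 : Tendsto (fun j : ℕ => (1:ℝ)/j) atTop (nhds 0) :=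
    tendsto_one_div_atTop_nhds_zero_nat
  have hden : Tendsto (fun j : ℕ => ((1:ℝ)+1/(j:ℝ))*(3+4*(1/j))) atTop
      (nhds ((1+0)*(3+4*0))) :=
    (tendsto_const_nhds.add h0).mul (tendsto_const_nhds.add (tendsto_const_nhds.mul h0))
  have hq := (tendsto_const_nhds :
    Tendsto (fun _ : ℕ => (2/(a:ℝ))) atTop (nhds (2/(a:ℝ)))).div hden (by norm_num)
  have hconst : (2/(a:ℝ))/((1+0)*(3+4*0)) = 2/(3*a) := by
    field_simp
    ring
  rw [hconst] at hq
  apply hq.congr'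
  rw [Filter.eventuallyEq_iff_exists_mem]
  refine ⟨{j | 1 ≤ j}, Filter.mem_atTop 1, ?_⟩
  intro j hj
  have hj' : (0:ℝ) < (j:ℝ) := by
    have : (1:ℕ) ≤ j := hj
    exact_mod_cast Nat.lt_of_lt_of_le Nat.zero_lt_one this
  simp only [Pi.div_apply]
  field_simp
end T9
section T10
open Filter

/-- For positive integers `a`, `d`, the number of odd coefficients of
`f_a^{2^d}/(1-q^a)` in degrees `n ≤ x` is asymptotic to `2x/(3a)`, and all these
odd coefficients occur in degrees divisible by `a`. -/
theorem oddCount_fEta_pow_mul_geomA_asymp (a d : ℕ) (ha : 0 < a) (hd : 0 < d) :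
    Filter.Tendsto
      (fun x : ℕ => (oddCount ((fEta a) ^ (2 ^ d) * geomA a) x : ℝ) / x)
      Filter.atTop (nhds (2 / (3 * a))) ∧
    ∀ n : ℕ, Odd (PowerSeries.coeff n ((fEta a) ^ (2 ^ d) * geomA a)) → a ∣ n := by
  constructor
  · have hJt : Tendsto (fun x : ℕ => Jof d (x/a)) atTop atTop :=
      (tendsto_Jof d).comp (tendsto_div_const_atTop a ha)
    have main : Tendsto (fun x : ℕ => (Dcnt d (x/a) : ℝ) / x) atTop (nhds (2/(3*(a:ℝ)))) := by
      apply tendsto_of_tendsto_of_tendsto_of_le_of_le' ((limL a ha).comp hJt) ((limU a ha).comp hJt)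
      · -- lower bound eventually
        filter_upwards [hJt.eventually_ge_atTop 1, eventually_ge_atTop 1] with x hJ1 hx1
        simp only [Function.comp_apply]
        set Y := x / a with hY
        set jn := Jof d Y with hjn
        have hD : 2^d * jn^2 ≤ Dcnt d Y := Dcnt_lower d Y
        have hYlt : Y < vd d (2*jn+2) := by
          have := Jof_lt d Y
          rw [← hjn] at this
          omega
        have hxlt : x ≤ a * vd d (2*jn+2) := by
          have h1 : a * Y + x % a = x := by rw [hY]; exact Nat.div_add_mod x a
          have h2 : x % a < a := Nat.mod_lt x ha
          have h3 : Y + 1 ≤ vd d (2*jn+2) := hYlt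
          have h4 : a * (Y+1) ≤ a * vd d (2*jn+2) := Nat.mul_le_mul_left a h3
          have h5 : a * (Y + 1) = a * Y + a := by ring
          omega
        have hpos1 : (0:ℝ) < ((a * vd d (2*jn+2) : ℕ) : ℝ) := by
          have h6 : 2*jn+2 ≤ vd d (2*jn+2) := self_le_vd d _
          have : 0 < a * vd d (2*jn+2) := Nat.mul_pos ha (by omega)
          exact_mod_cast this
        have hposx : (0:ℝ) < (x:ℝ) := by exact_mod_cast hx1
        have step1 : ((2^d * jn^2 : ℕ) : ℝ) / ((a * vd d (2*jn+2) : ℕ) : ℝ)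
            ≤ (Dcnt d Y : ℝ) / x := by
          apply div_le_div₀ (by positivity) (by exact_mod_cast hD) hposx (by exact_mod_cast hxlt)
        have key : (2:ℝ) * ((vd d (2*jn+2) : ℕ) : ℝ) = 2^d * ((jn+1) * (3*jn+4)) := by
          have h := vd_even_closed d (jn+1)
          have e1 : 2*(jn+1) = 2*jn+2 := by ring
          have e2 : (jn+1)*(3*(jn+1)+1) = (jn+1)*(3*jn+4) := by ring
          rw [e1, e2] at h
          exact_mod_cast h
        have heq : ((2^d * jn^2 : ℕ) : ℝ) / ((a * vd d (2*jn+2) : ℕ) : ℝ)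
            = 2*(jn:ℝ)^2/(a * ((jn+1)*(3*jn+4))) := by
          have ha2 : (0:ℝ) < (a:ℝ) := by exact_mod_cast ha
          have hj0 : (0:ℝ) ≤ (jn:ℝ) := Nat.cast_nonneg jn
          have hpos3 : (0:ℝ) < (a:ℝ) * (((jn:ℝ)+1)*(3*jn+4)) :=
            mul_pos ha2 (mul_pos (by linarith) (by linarith))
          rw [div_eq_div_iff hpos1.ne' hpos3.ne']
          push_cast
          push_cast at key
          linear_combination (-(a:ℝ) * (jn:ℝ)^2) * key
        rw [← heq]
        exact step1
      · -- upper bound eventually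
        filter_upwards [hJt.eventually_ge_atTop 1, eventually_ge_atTop 1] with x hJ1 hx1
        simp only [Function.comp_apply]
        set Y := x / a with hY
        set jn := Jof d Y with hjn
        have hD : Dcnt d Y ≤ 2^d * (jn+1)^2 := Dcnt_upper d Y
        have hvY : vd d (2*jn) ≤ Y := Jof_spec d Y
        have hax : a * vd d (2*jn) ≤ x := by
          have h1 : a * vd d (2*jn) ≤ a * Y := Nat.mul_le_mul_left a hvY
          have h2 : a * Y ≤ x := by
            rw [hY, Nat.mul_comm]
            exact Nat.div_mul_le_self x a
          omega
        have hpos1 : 0 < a * vd d (2*jn) := by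
          have h1 : 2*jn ≤ vd d (2*jn) := self_le_vd d _
          have : 0 < vd d (2*jn) := by omega
          positivity
        have hpos1' : (0:ℝ) < ((a * vd d (2*jn) : ℕ) : ℝ) := by exact_mod_cast hpos1
        have step1 : (Dcnt d Y : ℝ) / x
            ≤ ((2^d * (jn+1)^2 : ℕ) : ℝ) / ((a * vd d (2*jn) : ℕ) : ℝ) := by
          apply div_le_div₀ (by positivity) (by exact_mod_cast hD) hpos1' (by exact_mod_cast hax)
        have key : (2:ℝ) * ((vd d (2*jn) : ℕ) : ℝ) = 2^d * (jn * (3*jn+1)) := by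
          have h := vd_even_closed d jn
          exact_mod_cast h
        have heq : ((2^d * (jn+1)^2 : ℕ) : ℝ) / ((a * vd d (2*jn) : ℕ) : ℝ)
            = 2*((jn:ℝ)+1)^2/(a * (jn*(3*jn+1))) := by
          have hpos2 : (0:ℝ) < (a:ℝ) * ((jn:ℝ)*(3*jn+1)) := by
            have h1 : (1:ℕ) ≤ jn := hJ1
            have h2 : (1:ℝ) ≤ (jn:ℝ) := by exact_mod_cast h1
            have ha2 : (0:ℝ) < (a:ℝ) := by exact_mod_cast ha
            exact mul_pos ha2 (mul_pos (by linarith) (by linarith))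
          rw [div_eq_div_iff hpos1'.ne' hpos2.ne']
          push_cast
          push_cast at key
          linear_combination (-(a:ℝ) * ((jn:ℝ)+1)^2) * key
        rw [heq] at step1
        exact step1
    have hcongr : ∀ x : ℕ, (Dcnt d (x/a) : ℝ) / x
        = (oddCount ((fEta a) ^ (2 ^ d) * geomA a) x : ℝ) / x := by
      intro x
      rw [oddCount_eq a d x ha]
    exact Tendsto.congr hcongr main
  · intro n hodd
    exact ((odd_coeff_iff a d n ha).mp hodd).1
end T10
end

section
/- The map x ↦ 2x² - x is injective on ℤ, and its image is exactly the set of triangular numbers (numbers of the form k(k+1)/2, k ≥ 0). -/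
lemma tri_div (a : ℤ) : (2 * a) * (2 * a + 1) / 2 = a * (2 * a + 1) := by
  rw [show (2 * a) * (2 * a + 1) = 2 * (a * (2 * a + 1)) by ring,
    Int.mul_ediv_cancel_left _ two_ne_zero]

/-- The map `x ↦ 2x² - x` is injective on `ℤ` and its image is exactly the set
of triangular numbers `k(k+1)/2` with `k ≥ 0`. -/
theorem injective_and_range_two_sq_sub :
    Function.Injective (fun x : ℤ => 2 * x ^ 2 - x) ∧
    Set.range (fun x : ℤ => 2 * x ^ 2 - x) =
      {n : ℤ | ∃ k : ℕ, n = (k : ℤ) * (k + 1) / 2} := by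
  constructor
  · intro a b h
    simp only at h
    have h2 : (a - b) * (2 * (a + b) - 1) = 0 := by ring_nf; linarith
    rcases mul_eq_zero.mp h2 with h3 | h3
    · linarith
    · omega
  · ext n
    simp only [Set.mem_range, Set.mem_setOf_eq]
    constructor
    · rintro ⟨x, rfl⟩
      rcases lt_trichotomy x 0 with hx | hx | hx
      · refine ⟨(-2 * x).toNat, ?_⟩
        have h1 : ((-2 * x).toNat : ℤ) = -2 * x := Int.toNat_of_nonneg (by omega)
        rw [h1, show (-2 : ℤ) * x = 2 * (-x) by ring, tri_div]
        ring
      · exact ⟨0, by simp [hx]⟩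
      · refine ⟨(2 * x - 1).toNat, ?_⟩
        have h1 : ((2 * x - 1).toNat : ℤ) = 2 * x - 1 := Int.toNat_of_nonneg (by omega)
        rw [h1, show (2 * x - 1) * (2 * x - 1 + 1) = (2 * x) * (2 * x - 1) by ring]
        rw [show (2 : ℤ) * x = 2 * x by rfl]
        rw [show (2 * x) * (2 * x - 1) = 2 * (x * (2 * x - 1)) by ring,
          Int.mul_ediv_cancel_left _ two_ne_zero]
        ring
    · rintro ⟨k, rfl⟩
      rcases Nat.even_or_odd k with ⟨m, hm⟩ | ⟨m, hm⟩
      · refine ⟨-(m : ℤ), ?_⟩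
        have : (k : ℤ) = 2 * m := by subst hm; push_cast; ring
        rw [this, tri_div]; ring
      · refine ⟨(m : ℤ) + 1, ?_⟩
        have : (k : ℤ) = 2 * m + 1 := by subst hm; push_cast; ring
        rw [this, show (2 * (m:ℤ) + 1) * (2 * m + 1 + 1) = (2 * (m + 1)) * (2 * (m+1) - 1) by ring]
        rw [show (2 * ((m:ℤ) + 1)) * (2 * (m+1) - 1) = 2 * ((m+1) * (2*(m+1)-1)) by ring,
          Int.mul_ediv_cancel_left _ two_ne_zero]
        ring
end

section
/- Assume (as a hypothesis) that for every sufficiently large d the series f_a^{2^d}·F is lacunary modulo 2, where F = ∑ a_n q^n is a fixed integer power series with no negative-degree terms. Then for every 0 ≤ b < a, the counting function g_{a,b}(x) = #{n ≤ x : n ≡ b (mod a), a_n even} satisfies g_{a,b}(x)/√x → ∞ as x → ∞. -/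
open scoped Classical

/-- `A` is lacunary modulo 2: the number of odd coefficients in degrees `≤ x` is `o(x)`. -/
def LacunaryMod2 (A : PowerSeries ℤ) : Prop :=
  Filter.Tendsto (fun x : ℕ => (oddCount A x : ℝ) / x) Filter.atTop (nhds 0)


namespace EV
open Finset



def pentL : ℕ → ℕ
  | 0 => 0
  | k+1 => pentL k + 3*k + 1

def pentR (k : ℕ) : ℕ := pentL k + k

def IsPent (n : ℕ) : Prop := ∃ k, pentL k = n ∨ pentR k = n

lemma pentL_id (k : ℕ) : 2 * pentL k + k = 3 * k * k := by
  induction k with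
  | zero => simp [pentL]
  | succ k ih => simp only [pentL]; ring_nf; ring_nf at ih; omega

lemma pentL_lt_pentR {k : ℕ} (hk : 1 ≤ k) : pentL k < pentR k := by
  simp [pentR]; omega

lemma pentR_lt_pentL_succ (k : ℕ) : pentR k < pentL (k+1) := by
  simp [pentR, pentL]; omega

lemma pentL_le_pentR (k : ℕ) : pentL k ≤ pentR k := by simp [pentR]

lemma pentL_strictMono : StrictMono pentL := by
  apply strictMono_nat_of_lt_succ
  intro k
  calc pentL k ≤ pentR k := pentL_le_pentR k
  _ < pentL (k+1) := pentR_lt_pentL_succ k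

lemma pentR_strictMono : StrictMono pentR := by
  apply strictMono_nat_of_lt_succ
  intro k
  calc pentR k < pentL (k+1) := pentR_lt_pentL_succ k
  _ ≤ pentR (k+1) := pentL_le_pentR _

lemma sq_le_pentL {k : ℕ} (hk : 1 ≤ k) : k * k ≤ pentL k := by
  have := pentL_id k
  nlinarith

lemma pentL_succ_le_of (k : ℕ) : 2*k + 1 ≤ pentL (k+1) := by
  simp [pentL]; omega

/-- exact count of pentagonal numbers in `[0, u]` for `pentR k ≤ u < pentL (k+1)` -/
noncomputable def cardPent (u : ℕ) : ℕ := ((range (u+1)).filter IsPent).card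

lemma pent_filter_eq {k u : ℕ} (h1 : pentR k ≤ u) (h2 : u < pentL (k+1)) :
    (range (u+1)).filter IsPent =
      ((Icc 1 k).image pentL) ∪ ((range (k+1)).image pentR) := by
  ext n
  simp only [mem_filter, mem_range, mem_union, mem_image, mem_Icc, Nat.lt_succ_iff]
  constructor
  · rintro ⟨hn, j, hj | hj⟩
    · rcases Nat.eq_zero_or_pos j with rfl | hj1
      · right; exact ⟨0, by omega, by simpa [pentR, pentL] using hj⟩
      · left
        refine ⟨j, ⟨hj1, ?_⟩, hj⟩
        by_contra hjk
        have : pentL (k+1) ≤ pentL j := pentL_strictMono.le_iff_le.2 (by omega)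
        omega
    · right
      refine ⟨j, ?_, hj⟩
      by_contra hjk
      have : pentR (k+1) ≤ pentR j := pentR_strictMono.le_iff_le.2 (by omega)
      have := pentR_lt_pentL_succ k
      have := pentL_le_pentR (k+1)
      omega
  · rintro (⟨j, ⟨hj1, hjk⟩, rfl⟩ | ⟨j, hjk, rfl⟩)
    · constructor
      · have : pentL j ≤ pentL k := pentL_strictMono.le_iff_le.2 hjk
        have := pentL_le_pentR k
        omega
      · exact ⟨j, Or.inl rfl⟩
    · constructor
      · have : pentR j ≤ pentR k := pentR_strictMono.le_iff_le.2 hjk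
        omega
      · exact ⟨j, Or.inr rfl⟩

lemma cardPent_eq {k u : ℕ} (h1 : pentR k ≤ u) (h2 : u < pentL (k+1)) :
    cardPent u = 2*k + 1 := by
  rw [cardPent, pent_filter_eq h1 h2]
  rw [card_union_of_disjoint, card_image_of_injective _ pentL_strictMono.injective,
    card_image_of_injective _ pentR_strictMono.injective]
  · simp; omega
  · rw [disjoint_left]
    intro n hnA hnB
    simp only [mem_image, mem_Icc] at hnA
    simp only [mem_image, mem_range] at hnB
    obtain ⟨j, hj, rfl⟩ := hnA
    obtain ⟨i, hi, hin⟩ := hnB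
    rcases lt_trichotomy i j with h | rfl | h
    · have h1 : pentR i < pentL (i+1) := pentR_lt_pentL_succ i
      have h2 : pentL (i+1) ≤ pentL j := pentL_strictMono.le_iff_le.2 (by omega)
      omega
    · have := pentL_lt_pentR hj.1; omega
    · have h1 : pentL j ≤ pentR j := pentL_le_pentR j
      have h2 : pentR j < pentL (j+1) := pentR_lt_pentL_succ j
      have h3 : pentL (j+1) ≤ pentL i := pentL_strictMono.le_iff_le.2 (by omega)
      have h4 : pentL i ≤ pentR i := pentL_le_pentR i
      omega

/-- upper bound on pentagonal counts -/
lemma cardPent_le (y : ℕ) : ((range (y+1)).filter IsPent).card ≤ 2 * (Nat.sqrt y + 1) := by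
  classical
  have hsub : (range (y+1)).filter IsPent ⊆
      ((range (Nat.sqrt y + 1) ×ˢ (range 2)).image fun p => if p.2 = 0 then pentL p.1 else pentR p.1) := by
    intro n hn
    simp only [mem_filter, mem_range, Nat.lt_succ_iff] at hn
    obtain ⟨hny, k, hk⟩ := hn
    have hky : k ≤ Nat.sqrt y := by
      rw [Nat.le_sqrt]
      rcases Nat.eq_zero_or_pos k with rfl | hk1
      · simp
      · have h1 := sq_le_pentL hk1
        have h2 := pentL_le_pentR k
        omega
    simp only [mem_image, mem_product, mem_range]
    rcases hk with hk | hk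
    · exact ⟨(k, 0), by simp [Nat.lt_succ_iff, hky], by simpa using hk⟩
    · exact ⟨(k, 1), by simp [Nat.lt_succ_iff, hky], by simpa using hk⟩
  calc ((range (y+1)).filter IsPent).card ≤ _ := card_le_card hsub
  _ ≤ ((range (Nat.sqrt y + 1) ×ˢ (range 2))).card := card_image_le
  _ = 2 * (Nat.sqrt y + 1) := by simp [mul_comm]



noncomputable def MxS (S : Finset ℕ) : ℕ := if h : S.Nonempty then S.max' h else 0
noncomputable def mnS (S : Finset ℕ) : ℕ := if h : S.Nonempty then S.min' h else 0
noncomputable def runT (S : Finset ℕ) : ℕ := if h : ∃ j, MxS S - j ∉ S then Nat.find h else 0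

variable {S : Finset ℕ} {x r : ℕ}

lemma MxS_mem (hne : S.Nonempty) : MxS S ∈ S := by
  rw [MxS, dif_pos hne]; exact S.max'_mem hne

lemma le_MxS (hne : S.Nonempty) (hx : x ∈ S) : x ≤ MxS S := by
  rw [MxS, dif_pos hne]; exact S.le_max' x hx

lemma mnS_mem (hne : S.Nonempty) : mnS S ∈ S := by
  rw [mnS, dif_pos hne]; exact S.min'_mem hne

lemma mnS_le (hne : S.Nonempty) (hx : x ∈ S) : mnS S ≤ x := by
  rw [mnS, dif_pos hne]; exact S.min'_le x hx

lemma MxS_eq_of (hm : x ∈ S) (hub : ∀ y ∈ S, y ≤ x) : MxS S = x := by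
  have hne : S.Nonempty := ⟨x, hm⟩
  exact le_antisymm (hub _ (MxS_mem hne)) (le_MxS hne hm)

lemma mnS_eq_of (hm : x ∈ S) (hlb : ∀ y ∈ S, x ≤ y) : mnS S = x := by
  have hne : S.Nonempty := ⟨x, hm⟩
  exact le_antisymm (mnS_le hne hm) (hlb _ (mnS_mem hne))

lemma mnS_pos (hne : S.Nonempty) (h0 : 0 ∉ S) : 1 ≤ mnS S := by
  have := mnS_mem hne
  rcases Nat.eq_zero_or_pos (mnS S) with h | h
  · rw [h] at this; exact absurd this h0
  · exact h

lemma runT_ex (h0 : 0 ∉ S) : ∃ j, MxS S - j ∉ S :=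
  ⟨MxS S, by rw [Nat.sub_self]; exact h0⟩

lemma runT_spec (h0 : 0 ∉ S) : MxS S - runT S ∉ S := by
  rw [runT, dif_pos (runT_ex h0)]; exact Nat.find_spec (runT_ex h0)

lemma runT_mem (h0 : 0 ∉ S) (hi : x < runT S) : MxS S - x ∈ S := by
  rw [runT, dif_pos (runT_ex h0)] at hi
  have := Nat.find_min (runT_ex h0) hi
  simpa using this

lemma runT_pos (hne : S.Nonempty) (h0 : 0 ∉ S) : 1 ≤ runT S := by
  by_contra h
  have h' : runT S = 0 := by omega
  have := runT_spec h0
  rw [h', Nat.sub_zero] at this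
  exact this (MxS_mem hne)

lemma runT_le_MxS (hne : S.Nonempty) (h0 : 0 ∉ S) : runT S ≤ MxS S := by
  by_contra h
  have := runT_mem h0 (show MxS S < runT S by omega)
  rw [Nat.sub_self] at this
  exact h0 this

lemma runT_eq_of (h0 : 0 ∉ S) (h1 : ∀ i < r, MxS S - i ∈ S) (h2 : MxS S - r ∉ S) :
    runT S = r := by
  rw [runT, dif_pos (runT_ex h0)]
  rw [Nat.find_eq_iff]
  exact ⟨h2, fun i hi => by simpa using h1 i hi⟩

lemma runT_ge_of (h0 : 0 ∉ S) (h1 : ∀ i < r, MxS S - i ∈ S) : r ≤ runT S := by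
  by_contra h
  exact runT_spec h0 (h1 _ (by omega))

lemma run_subset (hne : S.Nonempty) (h0 : 0 ∉ S) :
    Icc (MxS S - runT S + 1) (MxS S) ⊆ S := by
  intro x hx
  simp only [mem_Icc] at hx
  have h1 : MxS S - x < runT S := by
    have := runT_le_MxS hne h0; omega
  have := runT_mem h0 h1
  have hxM : x ≤ MxS S := hx.2
  rwa [Nat.sub_sub_self hxM] at this

lemma runT_le_card (hne : S.Nonempty) (h0 : 0 ∉ S) : runT S ≤ S.card := by
  have h := card_le_card (run_subset hne h0)
  rw [Nat.card_Icc] at h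
  have := runT_le_MxS hne h0
  omega

lemma card_le_Mx_sub_mn (hne : S.Nonempty) : S.card ≤ MxS S - mnS S + 1 := by
  have h : S ⊆ Icc (mnS S) (MxS S) := fun x hx => by
    simp only [mem_Icc]; exact ⟨mnS_le hne hx, le_MxS hne hx⟩
  have h2 := card_le_card h
  rw [Nat.card_Icc] at h2
  have := mnS_le hne (MxS_mem hne)
  omega

noncomputable def phiA (S : Finset ℕ) : Finset ℕ :=
  ((S.filter fun x => MxS S - mnS S < x).image (· + 1)) ∪
    ((S.filter fun x => x ≤ MxS S - mnS S).erase (mnS S))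

noncomputable def phiB (S : Finset ℕ) : Finset ℕ :=
  ((S.filter fun x => MxS S - runT S < x).image (· - 1)) ∪
    (S.filter fun x => x ≤ MxS S - runT S) ∪ {runT S}

noncomputable def phi (S : Finset ℕ) : Finset ℕ := if mnS S ≤ runT S then phiA S else phiB S


lemma caseA_main {S : Finset ℕ} (hne : S.Nonempty) (h0 : 0 ∉ S) {M s t : ℕ}
    (hM : MxS S = M) (hs : mnS S = s) (ht : runT S = t)
    (hst : s ≤ t) (hcard : s < S.card) :
    (∑ x ∈ phiA S, x) = (∑ x ∈ S, x) ∧ (phiA S).card + 1 = S.card ∧ (phiA S).Nonempty ∧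
    0 ∉ phiA S ∧ MxS (phiA S) = M + 1 ∧ runT (phiA S) = s ∧
    runT (phiA S) < mnS (phiA S) ∧ 2 * runT (phiA S) < MxS (phiA S) ∧ phiB (phiA S) = S := by
  have hsM : s ≤ M := hM ▸ hs ▸ mnS_le hne (MxS_mem hne)
  have hs1 : 1 ≤ s := hs ▸ mnS_pos hne h0
  have htM : t ≤ M := hM ▸ ht ▸ runT_le_MxS hne h0
  have hM2s : 2 * s ≤ M := by
    have := card_le_Mx_sub_mn hne
    rw [hM, hs] at this
    omega
  have hsmem : s ∈ S := hs ▸ mnS_mem hne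
  have hslb : ∀ y ∈ S, s ≤ y := fun y hy => hs ▸ mnS_le hne hy
  have htop : S.filter (fun x => M - s < x) = Icc (M - s + 1) M := by
    ext x
    simp only [mem_filter, mem_Icc]
    constructor
    · rintro ⟨hx, hlt⟩; exact ⟨by omega, hM ▸ le_MxS hne hx⟩
    · rintro ⟨h1, h2⟩
      have hi : M - x < t := by omega
      have hmm := runT_mem (x := M - x) h0 (by rw [ht]; exact hi)
      rw [hM, Nat.sub_sub_self h2] at hmm
      exact ⟨hmm, by omega⟩
  have hbot_s : s ∈ S.filter (fun x => x ≤ M - s) := by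
    simp only [mem_filter]; exact ⟨hsmem, by omega⟩
  have hphiA : phiA S = ((Icc (M - s + 1) M).image (· + 1)) ∪
      ((S.filter fun x => x ≤ M - s).erase s) := by
    rw [phiA, hM, hs, htop]
  have himg : (Icc (M - s + 1) M).image (· + 1) = Icc (M - s + 2) (M + 1) := by
    ext y
    simp only [mem_image, mem_Icc]
    constructor
    · rintro ⟨z, hz, rfl⟩; omega
    · rintro ⟨h1, h2⟩; exact ⟨y - 1, by omega, by omega⟩
  have hmemA : ∀ y, y ∈ phiA S ↔
      ((M - s + 2 ≤ y ∧ y ≤ M + 1) ∨ (y ∈ S ∧ y ≤ M - s ∧ y ≠ s)) := by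
    intro y
    rw [hphiA, himg]
    simp only [mem_union, mem_Icc, mem_erase, mem_filter]
    constructor
    · rintro (h | ⟨h1, h2, h3⟩)
      · exact Or.inl h
      · exact Or.inr ⟨h2, h3, h1⟩
    · rintro (h | ⟨h1, h2, h3⟩)
      · exact Or.inl h
      · exact Or.inr ⟨h3, h1, h2⟩
  -- split of S
  have hsplit : S.filter (fun x => M - s < x) ∪ S.filter (fun x => x ≤ M - s) = S := by
    have h1 : S.filter (fun x => x ≤ M - s) = S.filter (fun x => ¬ M - s < x) := by
      apply filter_congr; intro x _; simp [not_lt]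
    rw [h1, filter_union_filter_not_eq]
  have hsum_split : (∑ x ∈ S.filter (fun x => M - s < x), x) + (∑ x ∈ S.filter (fun x => x ≤ M - s), x) = ∑ x ∈ S, x := by
    have h1 : S.filter (fun x => x ≤ M - s) = S.filter (fun x => ¬ M - s < x) := by
      apply filter_congr; intro x _; simp [not_lt]
    rw [h1, sum_filter_add_sum_filter_not]
  have hcard_split : (S.filter (fun x => M - s < x)).card + (S.filter (fun x => x ≤ M - s)).card = S.card := by
    have h1 : S.filter (fun x => x ≤ M - s) = S.filter (fun x => ¬ M - s < x) := by
      apply filter_congr; intro x _; simp [not_lt]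
    rw [h1, card_filter_add_card_filter_not]
  have hdisj : Disjoint ((Icc (M - s + 1) M).image (· + 1))
      ((S.filter fun x => x ≤ M - s).erase s) := by
    rw [himg, disjoint_left]
    intro y hy hy2
    simp only [mem_Icc] at hy
    simp only [mem_erase, mem_filter] at hy2
    omega
  have hcard_Icc : (Icc (M - s + 1) M).card = s := by rw [Nat.card_Icc]; omega
  have hsum_img : (∑ y ∈ (Icc (M - s + 1) M).image (· + 1), y)
      = (∑ x ∈ Icc (M - s + 1) M, x) + s := by
    rw [sum_image (by intro a _ b _ h; simp only at h; omega)]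
    rw [sum_add_distrib, sum_const, hcard_Icc, smul_eq_mul, mul_one]
  have hcard_img : ((Icc (M - s + 1) M).image (· + 1)).card = s := by
    rw [card_image_of_injective _ (fun a b h => by omega), hcard_Icc]
  have hsum_erase : (∑ x ∈ (S.filter fun x => x ≤ M - s).erase s, x) + s
      = ∑ x ∈ S.filter fun x => x ≤ M - s, x := by
    have := Finset.sum_erase_add (S.filter fun x => x ≤ M - s) (fun x => x) hbot_s
    simpa using this
  have hcard_erase : ((S.filter fun x => x ≤ M - s).erase s).card + 1
      = (S.filter fun x => x ≤ M - s).card := by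
    rw [card_erase_of_mem hbot_s]
    have : 0 < (S.filter fun x => x ≤ M - s).card := card_pos.2 ⟨s, hbot_s⟩
    omega
  have hSum : (∑ x ∈ phiA S, x) = ∑ x ∈ S, x := by
    rw [hphiA, sum_union hdisj, hsum_img]
    have h2 : (∑ x ∈ S.filter (fun x => M - s < x), x) = ∑ x ∈ Icc (M - s + 1) M, x := by rw [htop]
    omega
  have hCard : (phiA S).card + 1 = S.card := by
    rw [hphiA, card_union_of_disjoint hdisj, hcard_img]
    have h2 : (S.filter (fun x => M - s < x)).card = s := by rw [htop, hcard_Icc]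
    omega
  have hNe : (phiA S).Nonempty := ⟨M + 1, (hmemA _).2 (Or.inl ⟨by omega, le_rfl⟩)⟩
  have h0' : 0 ∉ phiA S := by
    intro h
    rcases (hmemA 0).1 h with h | ⟨h1, _, _⟩
    · omega
    · exact h0 h1
  have hMx' : MxS (phiA S) = M + 1 := by
    apply MxS_eq_of ((hmemA _).2 (Or.inl ⟨by omega, le_rfl⟩))
    intro y hy
    rcases (hmemA y).1 hy with h | ⟨h1, h2, _⟩
    · omega
    · omega
  have hlow : ∀ y ∈ phiA S, s + 1 ≤ y := by
    intro y hy
    rcases (hmemA y).1 hy with h | ⟨h1, h2, h3⟩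
    · omega
    · have := hslb y h1; omega
  have hmn' : s + 1 ≤ mnS (phiA S) := hlow _ (mnS_mem hNe)
  have hrun' : runT (phiA S) = s := by
    apply runT_eq_of h0'
    · intro i hi
      rw [hMx']
      exact (hmemA _).2 (Or.inl ⟨by omega, by omega⟩)
    · rw [hMx']
      intro h
      rcases (hmemA _).1 h with h | ⟨h1, h2, _⟩
      · omega
      · omega
  refine ⟨hSum, hCard, hNe, h0', hMx', hrun', by omega, by rw [hrun', hMx']; omega, ?_⟩
  -- phiB (phiA S) = S
  have htop'' : (phiA S).filter (fun x => M + 1 - s < x) = Icc (M - s + 2) (M + 1) := by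
    ext y
    simp only [mem_filter, mem_Icc, hmemA y]
    constructor
    · rintro ⟨h | ⟨h1, h2, h3⟩, hgt⟩
      · omega
      · omega
    · rintro ⟨h1, h2⟩
      exact ⟨Or.inl ⟨h1, h2⟩, by omega⟩
  have himg'' : (Icc (M - s + 2) (M + 1)).image (· - 1) = Icc (M - s + 1) M := by
    ext y
    simp only [mem_image, mem_Icc]
    constructor
    · rintro ⟨z, hz, rfl⟩; omega
    · rintro ⟨h1, h2⟩; exact ⟨y + 1, by omega, by omega⟩
  have hbot'' : (phiA S).filter (fun x => x ≤ M + 1 - s)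
      = (S.filter fun x => x ≤ M - s).erase s := by
    ext y
    simp only [mem_filter, mem_erase, hmemA y]
    constructor
    · rintro ⟨h | ⟨h1, h2, h3⟩, hle⟩
      · omega
      · exact ⟨h3, h1, h2⟩
    · rintro ⟨h1, h2, h3⟩
      exact ⟨Or.inr ⟨h2, h3, h1⟩, by omega⟩
  rw [phiB, hMx', hrun', htop'', himg'', hbot'']
  ext y
  simp only [mem_union, mem_singleton, mem_erase, mem_filter, mem_Icc]
  constructor
  · rintro ((⟨h1, h2⟩ | ⟨h1, h2, h3⟩) | rfl)
    · have : y ∈ S.filter (fun x => M - s < x) := by rw [htop]; simp only [mem_Icc]; omega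
      exact (mem_filter.1 this).1
    · exact h2
    · exact hsmem
  · intro hy
    by_cases hgt : M - s < y
    · left; left
      have : y ∈ S.filter (fun x => M - s < x) := mem_filter.2 ⟨hy, hgt⟩
      rw [htop] at this
      simp only [mem_Icc] at this
      omega
    · by_cases hys : y = s
      · right; exact hys
      · left; right; exact ⟨hys, hy, by omega⟩

lemma caseB_main {S : Finset ℕ} (hne : S.Nonempty) (h0 : 0 ∉ S) {M s t : ℕ}
    (hM : MxS S = M) (hs : mnS S = s) (ht : runT S = t)
    (hts : t < s) (hMt : 2 * t < M) :
    (∑ x ∈ phiB S, x) = (∑ x ∈ S, x) ∧ (phiB S).card = S.card + 1 ∧ (phiB S).Nonempty ∧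
    0 ∉ phiB S ∧ MxS (phiB S) = M - 1 ∧ mnS (phiB S) = t ∧
    mnS (phiB S) ≤ runT (phiB S) ∧ mnS (phiB S) < (phiB S).card ∧ phiA (phiB S) = S := by
  have hsM : s ≤ M := hM ▸ hs ▸ mnS_le hne (MxS_mem hne)
  have hs1 : 1 ≤ s := hs ▸ mnS_pos hne h0
  have ht1 : 1 ≤ t := ht ▸ runT_pos hne h0
  have htM : t ≤ M := hM ▸ ht ▸ runT_le_MxS hne h0
  have hslb : ∀ y ∈ S, s ≤ y := fun y hy => hs ▸ mnS_le hne hy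
  have hMtS : M - t ∉ S := by
    have := runT_spec h0; rwa [hM, ht] at this
  have htop : S.filter (fun x => M - t < x) = Icc (M - t + 1) M := by
    ext x
    simp only [mem_filter, mem_Icc]
    constructor
    · rintro ⟨hx, hlt⟩; exact ⟨by omega, hM ▸ le_MxS hne hx⟩
    · rintro ⟨h1, h2⟩
      have hi : M - x < t := by omega
      have hmm := runT_mem (x := M - x) h0 (by rw [ht]; exact hi)
      rw [hM, Nat.sub_sub_self h2] at hmm
      exact ⟨hmm, by omega⟩
  have hphiB : phiB S = ((Icc (M - t + 1) M).image (· - 1)) ∪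
      (S.filter fun x => x ≤ M - t) ∪ {t} := by
    rw [phiB, hM, ht, htop]
  have himg : (Icc (M - t + 1) M).image (· - 1) = Icc (M - t) (M - 1) := by
    ext y
    simp only [mem_image, mem_Icc]
    constructor
    · rintro ⟨z, hz, rfl⟩; omega
    · rintro ⟨h1, h2⟩; exact ⟨y + 1, by omega, by omega⟩
  have hmemB : ∀ y, y ∈ phiB S ↔
      ((M - t ≤ y ∧ y ≤ M - 1) ∨ (y ∈ S ∧ y ≤ M - t) ∨ y = t) := by
    intro y
    rw [hphiB, himg]
    simp only [mem_union, mem_Icc, mem_filter, mem_singleton]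
    constructor
    · rintro ((h | ⟨h1, h2⟩) | h)
      · exact Or.inl h
      · exact Or.inr (Or.inl ⟨h1, h2⟩)
      · exact Or.inr (Or.inr h)
    · rintro (h | ⟨h1, h2⟩ | h)
      · exact Or.inl (Or.inl h)
      · exact Or.inl (Or.inr ⟨h1, h2⟩)
      · exact Or.inr h
  have hbotlt : ∀ y ∈ S, y ≤ M - t → y < M - t := by
    intro y hy hle
    rcases Nat.lt_or_ge y (M - t) with h | h
    · exact h
    · have : y = M - t := by omega
      rw [this] at hy; exact absurd hy hMtS
  -- splits
  have hsplit : S.filter (fun x => M - t < x) ∪ S.filter (fun x => x ≤ M - t) = S := by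
    have h1 : S.filter (fun x => x ≤ M - t) = S.filter (fun x => ¬ M - t < x) := by
      apply filter_congr; intro x _; simp [not_lt]
    rw [h1, filter_union_filter_not_eq]
  have hsum_split : (∑ x ∈ S.filter (fun x => M - t < x), x) + (∑ x ∈ S.filter (fun x => x ≤ M - t), x) = ∑ x ∈ S, x := by
    have h1 : S.filter (fun x => x ≤ M - t) = S.filter (fun x => ¬ M - t < x) := by
      apply filter_congr; intro x _; simp [not_lt]
    rw [h1, sum_filter_add_sum_filter_not]
  have hcard_split : (S.filter (fun x => M - t < x)).card + (S.filter (fun x => x ≤ M - t)).card = S.card := by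
    have h1 : S.filter (fun x => x ≤ M - t) = S.filter (fun x => ¬ M - t < x) := by
      apply filter_congr; intro x _; simp [not_lt]
    rw [h1, card_filter_add_card_filter_not]
  have hcard_Icc : (Icc (M - t + 1) M).card = t := by rw [Nat.card_Icc]; omega
  have hinj : ∀ x ∈ Icc (M - t + 1) M, ∀ y ∈ Icc (M - t + 1) M, x - 1 = y - 1 → x = y := by
    intro x hx y hy h
    simp only [mem_Icc] at hx hy
    omega
  have hsum_img : (∑ y ∈ (Icc (M - t + 1) M).image (· - 1), y) + t = ∑ x ∈ Icc (M - t + 1) M, x := by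
    rw [sum_image hinj]
    have h2 : ∑ x ∈ Icc (M - t + 1) M, x = ∑ x ∈ Icc (M - t + 1) M, ((x - 1) + 1) :=
      sum_congr rfl (fun x hx => by simp only [mem_Icc] at hx; omega)
    rw [h2, sum_add_distrib, sum_const, hcard_Icc, smul_eq_mul, mul_one]
  have hcard_img : ((Icc (M - t + 1) M).image (· - 1)).card = t := by
    rw [card_image_of_injOn hinj, hcard_Icc]
  have hdisj1 : Disjoint ((Icc (M - t + 1) M).image (· - 1)) (S.filter fun x => x ≤ M - t) := by
    rw [himg, disjoint_left]
    intro y hy hy2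
    simp only [mem_Icc] at hy
    simp only [mem_filter] at hy2
    have := hbotlt y hy2.1 hy2.2
    omega
  have hdisj2 : Disjoint (((Icc (M - t + 1) M).image (· - 1)) ∪ (S.filter fun x => x ≤ M - t)) ({t} : Finset ℕ) := by
    rw [himg, disjoint_right]
    intro y hy hy2
    simp only [mem_singleton] at hy
    simp only [mem_union, mem_Icc, mem_filter] at hy2
    rcases hy2 with h | ⟨h1, _⟩
    · omega
    · have := hslb y h1; omega
  have hSum : (∑ x ∈ phiB S, x) = ∑ x ∈ S, x := by
    rw [hphiB, sum_union hdisj2, sum_union hdisj1, sum_singleton]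
    have h2 : (∑ x ∈ S.filter (fun x => M - t < x), x) = ∑ x ∈ Icc (M - t + 1) M, x := by rw [htop]
    omega
  have hCard : (phiB S).card = S.card + 1 := by
    rw [hphiB, card_union_of_disjoint hdisj2, card_union_of_disjoint hdisj1, card_singleton, hcard_img]
    have h2 : (S.filter (fun x => M - t < x)).card = t := by rw [htop, hcard_Icc]
    omega
  have htmem : t ∈ phiB S := (hmemB t).2 (Or.inr (Or.inr rfl))
  have hNe : (phiB S).Nonempty := ⟨t, htmem⟩
  have h0' : 0 ∉ phiB S := by
    intro h
    rcases (hmemB 0).1 h with h | ⟨h1, _⟩ | h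
    · omega
    · exact h0 h1
    · omega
  have hMx' : MxS (phiB S) = M - 1 := by
    apply MxS_eq_of ((hmemB _).2 (Or.inl ⟨by omega, le_rfl⟩))
    intro y hy
    rcases (hmemB y).1 hy with h | ⟨h1, h2⟩ | rfl
    · omega
    · have := hbotlt y h1 h2; omega
    · omega
  have hmn' : mnS (phiB S) = t := by
    apply mnS_eq_of htmem
    intro y hy
    rcases (hmemB y).1 hy with h | ⟨h1, _⟩ | rfl
    · omega
    · have := hslb y h1; omega
    · exact le_rfl
  have hrun' : t ≤ runT (phiB S) := by
    apply runT_ge_of h0'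
    intro i hi
    rw [hMx']
    exact (hmemB _).2 (Or.inl ⟨by omega, by omega⟩)
  refine ⟨hSum, hCard, hNe, h0', hMx', hmn', by omega, by rw [hmn', hCard]; have := runT_le_card hne h0; rw [ht] at this; omega, ?_⟩
  -- phiA (phiB S) = S
  have htop'' : (phiB S).filter (fun x => M - 1 - t < x) = Icc (M - t) (M - 1) := by
    ext y
    simp only [mem_filter, mem_Icc, hmemB y]
    constructor
    · rintro ⟨h | ⟨h1, h2⟩ | rfl, hgt⟩
      · omega
      · have := hbotlt y h1 h2; omega
      · omega
    · rintro ⟨h1, h2⟩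
      exact ⟨Or.inl ⟨h1, h2⟩, by omega⟩
  have himg'' : (Icc (M - t) (M - 1)).image (· + 1) = Icc (M - t + 1) M := by
    ext y
    simp only [mem_image, mem_Icc]
    constructor
    · rintro ⟨z, hz, rfl⟩; omega
    · rintro ⟨h1, h2⟩; exact ⟨y - 1, by omega, by omega⟩
  have hbot'' : (phiB S).filter (fun x => x ≤ M - 1 - t)
      = (S.filter fun x => x ≤ M - t) ∪ {t} := by
    ext y
    simp only [mem_filter, mem_union, mem_singleton, hmemB y]
    constructor
    · rintro ⟨h | ⟨h1, h2⟩ | rfl, hle⟩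
      · omega
      · exact Or.inl ⟨h1, h2⟩
      · exact Or.inr rfl
    · rintro (⟨h1, h2⟩ | rfl)
      · have := hbotlt y h1 h2
        exact ⟨Or.inr (Or.inl ⟨h1, h2⟩), by omega⟩
      · exact ⟨Or.inr (Or.inr rfl), by omega⟩
  have herase : ((S.filter fun x => x ≤ M - t) ∪ {t}).erase t = S.filter fun x => x ≤ M - t := by
    ext y
    simp only [mem_erase, mem_union, mem_singleton, mem_filter]
    constructor
    · rintro ⟨hne', ⟨h1, h2⟩ | rfl⟩
      · exact ⟨h1, h2⟩
      · exact absurd rfl hne'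
    · rintro ⟨h1, h2⟩
      have := hslb y h1
      exact ⟨by omega, Or.inl ⟨h1, h2⟩⟩
  rw [phiA, hMx', hmn', htop'', himg'', hbot'', herase, ← htop, hsplit]

def Dn (n : ℕ) : Finset (Finset ℕ) :=
  (Icc 1 (n+1)).powerset.filter fun S => (∑ x ∈ S, x) = n

def Exc (S : Finset ℕ) : Prop :=
  ∃ k, 1 ≤ k ∧ (S = Icc k (2*k-1) ∨ S = Icc (k+1) (2*k))

lemma mem_Dn {n : ℕ} {S : Finset ℕ} : S ∈ Dn n ↔ (0 ∉ S ∧ (∑ x ∈ S, x) = n) := by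
  simp only [Dn, mem_filter, mem_powerset]
  constructor
  · rintro ⟨hsub, hsum⟩
    refine ⟨fun h => ?_, hsum⟩
    have := hsub h
    simp at this
  · rintro ⟨h0, hsum⟩
    refine ⟨fun x hx => ?_, hsum⟩
    have h1 : 1 ≤ x := by
      rcases Nat.eq_zero_or_pos x with rfl | h
      · exact absurd hx h0
      · exact h
    have h2 : x ≤ ∑ y ∈ S, y := single_le_sum (f := fun y => y) (fun i _ => Nat.zero_le i) hx
    simp only [mem_Icc]
    omega

lemma nonempty_of_mem_Dn {n : ℕ} (hn : 1 ≤ n) {S : Finset ℕ} (hS : S ∈ Dn n) : S.Nonempty := by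
  rcases S.eq_empty_or_nonempty with rfl | h
  · have := (mem_Dn.1 hS).2
    simp at this
    omega
  · exact h

lemma stair_inv {c M' : ℕ} (h1 : 1 ≤ c) (hcM : c ≤ M') :
    MxS (Icc c M') = M' ∧ mnS (Icc c M') = c ∧ runT (Icc c M') = M' - c + 1 := by
  have hne : (Icc c M').Nonempty := ⟨c, by simp [mem_Icc]; omega⟩
  have h0 : 0 ∉ Icc c M' := by simp [mem_Icc]; omega
  have hMx : MxS (Icc c M') = M' := by
    apply MxS_eq_of (by simp [mem_Icc]; omega)
    intro y hy; simp only [mem_Icc] at hy; omega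
  have hmn : mnS (Icc c M') = c := by
    apply mnS_eq_of (by simp [mem_Icc]; omega)
    intro y hy; simp only [mem_Icc] at hy; omega
  refine ⟨hMx, hmn, ?_⟩
  apply runT_eq_of h0
  · intro i hi; rw [hMx]; simp only [mem_Icc]; omega
  · rw [hMx]; simp only [mem_Icc]; omega

lemma filter_run_eq {S : Finset ℕ} (hne : S.Nonempty) (h0 : 0 ∉ S) :
    S.filter (fun x => MxS S - runT S < x) = Icc (MxS S - runT S + 1) (MxS S) := by
  have ht1 := runT_pos hne h0
  have htM := runT_le_MxS hne h0
  ext x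
  simp only [mem_filter, mem_Icc]
  constructor
  · rintro ⟨hx, hlt⟩; exact ⟨by omega, le_MxS hne hx⟩
  · rintro ⟨h1, h2⟩
    have hmm := runT_mem (x := MxS S - x) h0 (by omega)
    rw [Nat.sub_sub_self h2] at hmm
    exact ⟨hmm, by omega⟩

lemma split_run {S : Finset ℕ} :
    S.filter (fun x => MxS S - runT S < x) ∪ S.filter (fun x => x ≤ MxS S - runT S) = S := by
  have h1 : S.filter (fun x => x ≤ MxS S - runT S) = S.filter (fun x => ¬ MxS S - runT S < x) := by
    apply filter_congr; intro x _; simp [not_lt]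
  rw [h1, filter_union_filter_not_eq]

lemma classify {n : ℕ} {S : Finset ℕ} (hS : S ∈ Dn n) (hne : S.Nonempty) (hexc : ¬ Exc S) :
    (mnS S ≤ runT S → mnS S < S.card) ∧ (runT S < mnS S → 2 * runT S < MxS S) := by
  have h0 : 0 ∉ S := (mem_Dn.1 hS).1
  have hs1 := mnS_pos hne h0
  have ht1 := runT_pos hne h0
  have htM := runT_le_MxS hne h0
  have hsM := mnS_le hne (MxS_mem hne)
  constructor
  · intro hst
    by_contra hc
    push_neg at hc
    have htc := runT_le_card hne h0
    have heq1 : mnS S = runT S := by omega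
    have heq2 : runT S = S.card := by omega
    have hsub := run_subset hne h0
    have hcIcc : (Icc (MxS S - runT S + 1) (MxS S)).card = runT S := by
      rw [Nat.card_Icc]; omega
    have hSeq : S = Icc (MxS S - runT S + 1) (MxS S) :=
      (Finset.eq_of_subset_of_card_le hsub (by omega)).symm
    have hmnIcc := (stair_inv (c := MxS S - runT S + 1) (M' := MxS S) (by omega) (by omega)).2.1
    have hmneq : mnS S = MxS S - runT S + 1 := by
      have h' := hmnIcc
      rw [← hSeq] at h'
      exact h'
    apply hexc
    refine ⟨mnS S, hs1, Or.inl ?_⟩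
    have hIccEq : Icc (MxS S - runT S + 1) (MxS S) = Icc (mnS S) (2 * mnS S - 1) := by
      rw [show MxS S - runT S + 1 = mnS S by omega, show MxS S = 2 * mnS S - 1 by omega]
    exact hSeq.trans hIccEq
  · intro hts
    by_contra hc
    push_neg at hc
    have hbot : S.filter (fun x => x ≤ MxS S - runT S) = ∅ := by
      rw [filter_eq_empty_iff]
      intro x hx
      have := mnS_le hne hx
      omega
    have hSeq : S = Icc (MxS S - runT S + 1) (MxS S) := by
      conv_lhs => rw [← split_run (S := S)]
      rw [hbot, union_empty, filter_run_eq hne h0]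
    have hmnIcc := (stair_inv (c := MxS S - runT S + 1) (M' := MxS S) (by omega) (by omega)).2.1
    have hmneq : mnS S = MxS S - runT S + 1 := by
      have h' := hmnIcc
      rw [← hSeq] at h'
      exact h'
    apply hexc
    refine ⟨runT S, ht1, Or.inr ?_⟩
    have hIccEq : Icc (MxS S - runT S + 1) (MxS S) = Icc (runT S + 1) (2 * runT S) := by
      rw [show MxS S - runT S + 1 = runT S + 1 by omega, show MxS S = 2 * runT S by omega]
    exact hSeq.trans hIccEq

lemma phi_good {n : ℕ} (hn : 1 ≤ n) {S : Finset ℕ} (hS : S ∈ Dn n) (hexc : ¬ Exc S) :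
    phi S ∈ Dn n ∧ ¬ Exc (phi S) ∧ phi S ≠ S ∧ phi (phi S) = S := by
  have hne : S.Nonempty := nonempty_of_mem_Dn hn hS
  have h0 : 0 ∉ S := (mem_Dn.1 hS).1
  have hsum : (∑ x ∈ S, x) = n := (mem_Dn.1 hS).2
  rcases le_or_gt (mnS S) (runT S) with hst | hts
  · have hcard := (classify hS hne hexc).1 hst
    obtain ⟨hA1, hA2, hA3, hA4, hA5, hA6, hA7, hA8, hA9⟩ :=
      caseA_main hne h0 rfl rfl rfl hst hcard
    have hphi : phi S = phiA S := if_pos hst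
    rw [hphi]
    refine ⟨mem_Dn.2 ⟨hA4, by rw [hA1, hsum]⟩, ?_, ?_, ?_⟩
    · rintro ⟨k, hk, hk2 | hk2⟩
      · have hinv := stair_inv (c := k) (M' := 2*k-1) hk (by omega)
        rw [hk2] at hA6 hA7
        rw [hinv.2.2, hinv.2.1] at hA7
        rw [hinv.2.2] at hA6
        omega
      · have hinv := stair_inv (c := k+1) (M' := 2*k) (by omega) (by omega)
        rw [hk2] at hA8
        rw [hinv.2.2, hinv.1] at hA8
        omega
    · intro h
      rw [h] at hA2
      omega
    · rw [phi, if_neg (by omega)]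
      exact hA9
  · have hMt := (classify hS hne hexc).2 hts
    obtain ⟨hB1, hB2, hB3, hB4, hB5, hB6, hB7, hB8, hB9⟩ :=
      caseB_main hne h0 rfl rfl rfl hts hMt
    have hphi : phi S = phiB S := if_neg (by omega)
    rw [hphi]
    refine ⟨mem_Dn.2 ⟨hB4, by rw [hB1, hsum]⟩, ?_, ?_, ?_⟩
    · rintro ⟨k, hk, hk2 | hk2⟩
      · have hinv := stair_inv (c := k) (M' := 2*k-1) hk (by omega)
        have hcIcc : (Icc k (2*k-1)).card = k := by rw [Nat.card_Icc]; omega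
        rw [hk2] at hB6 hB8
        rw [hinv.2.1] at hB6 hB8
        rw [hcIcc] at hB8
        omega
      · have hinv := stair_inv (c := k+1) (M' := 2*k) (by omega) (by omega)
        rw [hk2] at hB6 hB7
        rw [hinv.2.1] at hB6 hB7
        rw [hinv.2.2] at hB7
        omega
    · intro h
      rw [h] at hB2
      omega
    · rw [phi, if_pos hB7]
      exact hB9

lemma mul_pred_add (k : ℕ) : k*(k-1) + k = k*k := by
  cases k with
  | zero => simp
  | succ m => simp only [Nat.succ_sub_one]; ring

lemma sum_stair1 {k : ℕ} (hk : 1 ≤ k) : (∑ x ∈ Icc k (2*k-1), x) = pentL k := by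
  have himg : Icc k (2*k-1) = (range k).image (fun i => k + i) := by
    ext x
    simp only [mem_Icc, mem_image, mem_range]
    constructor
    · intro h; exact ⟨x - k, by omega, by omega⟩
    · rintro ⟨i, hi, rfl⟩; omega
  rw [himg, sum_image (by intro a _ b _ h; simp only at h; omega), sum_add_distrib, sum_const, card_range,
    smul_eq_mul]
  have hB := Finset.sum_range_id_mul_two k
  have hP := pentL_id k
  rw [mul_assoc] at hP
  have hR := mul_pred_add k
  omega

lemma sum_stair2 {k : ℕ} (hk : 1 ≤ k) : (∑ x ∈ Icc (k+1) (2*k), x) = pentR k := by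
  have himg : Icc (k+1) (2*k) = (range k).image (fun i => k + 1 + i) := by
    ext x
    simp only [mem_Icc, mem_image, mem_range]
    constructor
    · intro h; exact ⟨x - (k+1), by omega, by omega⟩
    · rintro ⟨i, hi, rfl⟩; omega
  rw [himg, sum_image (by intro a _ b _ h; simp only at h; omega), sum_add_distrib, sum_const, card_range,
    smul_eq_mul]
  have hB := Finset.sum_range_id_mul_two k
  have hP := pentL_id k
  rw [mul_assoc] at hP
  have hR := mul_pred_add k
  have hQ : k*(k+1) = k*k + k := by ring
  simp only [pentR]
  omega

lemma pentL_ne_pentR {j k : ℕ} (hj : 1 ≤ j) (hk : 1 ≤ k) : pentL j ≠ pentR k := by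
  rcases le_or_gt j k with h | h
  · have h1 : pentL j ≤ pentL k := pentL_strictMono.monotone h
    have h2 : pentL k < pentR k := pentL_lt_pentR hk
    omega
  · have h1 : pentR k < pentL (k+1) := pentR_lt_pentL_succ k
    have h2 : pentL (k+1) ≤ pentL j := pentL_strictMono.monotone (by omega)
    omega

lemma stair1_mem_Dn {k : ℕ} (hk : 1 ≤ k) : Icc k (2*k-1) ∈ Dn (pentL k) :=
  mem_Dn.2 ⟨by simp only [mem_Icc]; omega, sum_stair1 hk⟩

lemma stair2_mem_Dn {k : ℕ} (hk : 1 ≤ k) : Icc (k+1) (2*k) ∈ Dn (pentR k) :=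
  mem_Dn.2 ⟨by simp only [mem_Icc]; omega, sum_stair2 hk⟩

lemma exc_card {n : ℕ} (hn : 1 ≤ n) :
    ((Dn n).filter Exc).card = if IsPent n then 1 else 0 := by
  by_cases hp : IsPent n
  · rw [if_pos hp]
    obtain ⟨k, hk⟩ := hp
    have hk1 : 1 ≤ k := by
      rcases Nat.eq_zero_or_pos k with rfl | h
      · simp only [pentL, pentR] at hk
        omega
      · exact h
    rcases hk with hkL | hkR
    · have heq : (Dn n).filter Exc = {Icc k (2*k-1)} := by
        ext T
        simp only [mem_filter, mem_singleton]
        constructor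
        · rintro ⟨hT, j, hj, rfl | rfl⟩
          · have hs := (mem_Dn.1 hT).2
            rw [sum_stair1 hj] at hs
            have : j = k := pentL_strictMono.injective (hs.trans hkL.symm)
            rw [this]
          · have hs := (mem_Dn.1 hT).2
            rw [sum_stair2 hj] at hs
            exact absurd (hkL.trans hs.symm) (pentL_ne_pentR hk1 hj)
        · rintro rfl
          exact ⟨hkL ▸ stair1_mem_Dn hk1, ⟨k, hk1, Or.inl rfl⟩⟩
      rw [heq, card_singleton]
    · have heq : (Dn n).filter Exc = {Icc (k+1) (2*k)} := by
        ext T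
        simp only [mem_filter, mem_singleton]
        constructor
        · rintro ⟨hT, j, hj, rfl | rfl⟩
          · have hs := (mem_Dn.1 hT).2
            rw [sum_stair1 hj] at hs
            exact absurd (hs.trans hkR.symm) (pentL_ne_pentR hj hk1)
          · have hs := (mem_Dn.1 hT).2
            rw [sum_stair2 hj] at hs
            have : j = k := pentR_strictMono.injective (hs.trans hkR.symm)
            rw [this]
        · rintro rfl
          exact ⟨hkR ▸ stair2_mem_Dn hk1, ⟨k, hk1, Or.inr rfl⟩⟩
      rw [heq, card_singleton]
  · rw [if_neg hp]
    have heq : (Dn n).filter Exc = ∅ := by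
      rw [filter_eq_empty_iff]
      rintro T hT ⟨j, hj, rfl | rfl⟩
      · exact hp ⟨j, Or.inl ((sum_stair1 hj).symm.trans (mem_Dn.1 hT).2)⟩
      · exact hp ⟨j, Or.inr ((sum_stair2 hj).symm.trans (mem_Dn.1 hT).2)⟩
    rw [heq, card_empty]

theorem Dn_card_mod2 (n : ℕ) : ((Dn n).card : ZMod 2) = if IsPent n then 1 else 0 := by
  rcases Nat.eq_zero_or_pos n with rfl | hn
  · have h1 : Dn 0 = {∅} := by
      ext S
      rw [mem_Dn]
      simp only [mem_singleton]
      constructor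
      · rintro ⟨h0, hsum⟩
        rw [eq_empty_iff_forall_notMem]
        intro x hx
        have h1 : x = 0 := by
          by_contra hne
          have h1 : 1 ≤ x := by omega
          have h2 : x ≤ ∑ y ∈ S, y := single_le_sum (f := fun y => y) (fun i _ => Nat.zero_le i) hx
          omega
        rw [h1] at hx
        exact h0 hx
      · rintro rfl
        simp
    rw [h1, card_singleton, if_pos ⟨0, Or.inl rfl⟩]
    simp
  · have hsplit := card_filter_add_card_filter_not (s := Dn n) (p := Exc)
    have h2 : (((Dn n).filter (fun S => ¬ Exc S)).card : ZMod 2) = 0 := by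
      rw [Finset.cast_card]
      apply sum_involution (g := fun S _ => phi S)
      · intro S _; decide
      · intro S hS _
        have hm := mem_filter.1 hS
        exact (phi_good hn hm.1 hm.2).2.2.1
      · intro S hS
        have hm := mem_filter.1 hS
        have h := phi_good hn hm.1 hm.2
        exact mem_filter.2 ⟨h.1, h.2.1⟩
      · intro S hS
        have hm := mem_filter.1 hS
        exact (phi_good hn hm.1 hm.2).2.2.2
    have : ((Dn n).card : ZMod 2)
        = (((Dn n).filter Exc).card : ZMod 2) + (((Dn n).filter (fun S => ¬ Exc S)).card : ZMod 2) := by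
      rw [← Nat.cast_add, hsplit]
    rw [this, h2, add_zero, exc_card hn]
    split <;> simp

-- ===== power series over ZMod 2 =====

lemma zmod2_neg (x : PowerSeries (ZMod 2)) : -x = x := by
  have hz : ∀ z : ZMod 2, -z = z := by decide
  ext n
  rw [map_neg, hz]

lemma zmod2_sub (x y : PowerSeries (ZMod 2)) : x - y = x + y := by
  rw [sub_eq_add_neg, zmod2_neg]

/-- the mod-2 reduction of a power series over ℤ -/
noncomputable def red (A : PowerSeries ℤ) : PowerSeries (ZMod 2) :=
  PowerSeries.map (Int.castRingHom (ZMod 2)) A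

lemma red_coeff (A : PowerSeries ℤ) (n : ℕ) :
    (PowerSeries.coeff n) (red A) = ((PowerSeries.coeff n A : ℤ) : ZMod 2) :=
  PowerSeries.coeff_map _ _ _

lemma odd_iff_red (A : PowerSeries ℤ) (n : ℕ) :
    Odd (PowerSeries.coeff n A) ↔ (PowerSeries.coeff n) (red A) ≠ 0 := by
  rw [red_coeff, Ne, ZMod.intCast_zmod_eq_zero_iff_dvd]
  push_cast
  rw [Int.odd_iff, Int.dvd_iff_emod_eq_zero]
  omega

lemma even_iff_red (A : PowerSeries ℤ) (n : ℕ) :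
    (2 : ℤ) ∣ PowerSeries.coeff n A ↔ (PowerSeries.coeff n) (red A) = 0 := by
  rw [red_coeff, ZMod.intCast_zmod_eq_zero_iff_dvd]
  push_cast
  rfl

/-- coefficients of the reduction of `fEta a` -/
lemma coeff_red_fEta {a : ℕ} (ha : 0 < a) (n : ℕ) :
    (PowerSeries.coeff n) (red (fEta a))
      = if a ∣ n then (if IsPent (n / a) then 1 else 0) else 0 := by
  have h1 : (PowerSeries.coeff n) (red (fEta a))
      = (PowerSeries.coeff n)
        (∏ i ∈ Icc 1 (n + 1), (1 + (PowerSeries.X : PowerSeries (ZMod 2)) ^ (a * i))) := by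
    rw [red, fEta]
    rw [PowerSeries.coeff_map, PowerSeries.coeff_mk, ← PowerSeries.coeff_map, map_prod]
    congr 1
    apply Finset.prod_congr rfl
    intro i _
    rw [map_sub, map_one, map_pow, PowerSeries.map_X, zmod2_sub]
  rw [h1]
  have h3 : (∏ i ∈ Icc 1 (n + 1), (1 + (PowerSeries.X : PowerSeries (ZMod 2)) ^ (a * i)))
      = ∑ t ∈ (Icc 1 (n+1)).powerset,
          (PowerSeries.X : PowerSeries (ZMod 2)) ^ (a * ∑ i ∈ t, i) := by
    have hcomm : (∏ i ∈ Icc 1 (n + 1), (1 + (PowerSeries.X : PowerSeries (ZMod 2)) ^ (a * i)))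
        = ∏ i ∈ Icc 1 (n + 1), ((PowerSeries.X : PowerSeries (ZMod 2)) ^ (a * i) + 1) := by
      apply Finset.prod_congr rfl; intro i _; ring
    rw [hcomm, Finset.prod_add]
    apply Finset.sum_congr rfl
    intro t _
    rw [prod_const_one, mul_one, Finset.prod_pow_eq_pow_sum, ← Finset.mul_sum]
  rw [h3, map_sum]
  have h4 : ∀ t ∈ (Icc 1 (n+1)).powerset,
      (PowerSeries.coeff n)
          ((PowerSeries.X : PowerSeries (ZMod 2)) ^ (a * ∑ i ∈ t, i))
        = if a * (∑ i ∈ t, i) = n then 1 else 0 := by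
    intro t _
    rw [PowerSeries.coeff_X_pow]
    by_cases h : a * (∑ i ∈ t, i) = n
    · rw [if_pos h, if_pos h.symm]
    · rw [if_neg h, if_neg (fun hh => h hh.symm)]
  rw [Finset.sum_congr rfl h4, Finset.sum_boole]
  by_cases hd : a ∣ n
  · have hfe : (Icc 1 (n+1)).powerset.filter (fun t => a * (∑ i ∈ t, i) = n) = Dn (n / a) := by
      ext S
      simp only [mem_filter, mem_powerset, Dn]
      constructor
      · rintro ⟨hsub, hsum⟩
        have hq : (∑ i ∈ S, i) = n / a := by
          rw [← hsum, Nat.mul_div_cancel_left _ ha]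
        refine ⟨?_, hq⟩
        intro x hx
        have hx1 := hsub hx
        simp only [mem_Icc] at hx1 ⊢
        have hle : x ≤ ∑ i ∈ S, i := single_le_sum (f := fun y => y) (fun i _ => Nat.zero_le i) hx
        omega
      · rintro ⟨hsub, hsum⟩
        have hq : a * (n / a) = n := Nat.mul_div_cancel' hd
        constructor
        · intro x hx
          have hx1 := hsub hx
          simp only [mem_Icc] at hx1 ⊢
          have : n / a ≤ n := Nat.div_le_self n a
          omega
        · rw [hsum]; exact hq
    rw [hfe, if_pos hd]
    exact Dn_card_mod2 (n / a)
  · have hfe : (Icc 1 (n+1)).powerset.filter (fun t => a * (∑ i ∈ t, i) = n) = ∅ := by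
      rw [filter_eq_empty_iff]
      intro t _ h
      exact hd ⟨_, h.symm⟩
    rw [hfe, if_neg hd]
    simp

-- ===== Frobenius =====

lemma coeff_sq (A : PowerSeries (ZMod 2)) (n : ℕ) :
    (PowerSeries.coeff n) (A ^ 2)
      = if 2 ∣ n then (PowerSeries.coeff (n / 2)) A else 0 := by
  have hxx : ∀ x : ZMod 2, x * x = x := by decide
  have hadd : ∀ x : ZMod 2, x + x = 0 := by decide
  rw [sq, PowerSeries.coeff_mul]
  rw [← Finset.sum_filter_add_sum_filter_not (Finset.HasAntidiagonal.antidiagonal n) (fun p => p.1 = p.2)]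
  have hoff : ∑ p ∈ (Finset.HasAntidiagonal.antidiagonal n).filter (fun p => ¬ p.1 = p.2),
      (PowerSeries.coeff p.1) A * (PowerSeries.coeff p.2) A = 0 := by
    apply Finset.sum_involution (g := fun p _ => (p.2, p.1))
    · intro p _
      simp only
      rw [mul_comm]
      exact hadd _
    · intro p hp _
      simp only [mem_filter] at hp
      intro h
      apply hp.2
      have := congrArg Prod.fst h
      simp only at this
      rw [← this]
    · intro p hp
      simp only [mem_filter, Finset.HasAntidiagonal.mem_antidiagonal] at hp ⊢
      omega
    · intro p _
      rfl
  rw [hoff, add_zero]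
  by_cases hd : 2 ∣ n
  · have heq : (Finset.HasAntidiagonal.antidiagonal n).filter (fun p => p.1 = p.2) = {(n/2, n/2)} := by
      ext p
      simp only [mem_filter, Finset.HasAntidiagonal.mem_antidiagonal, mem_singleton, Prod.ext_iff]
      omega
    rw [heq, Finset.sum_singleton, hxx, if_pos hd]
  · have heq : (Finset.HasAntidiagonal.antidiagonal n).filter (fun p => p.1 = p.2) = ∅ := by
      rw [filter_eq_empty_iff]
      intro p hp
      simp only [Finset.HasAntidiagonal.mem_antidiagonal] at hp
      omega
    rw [heq, Finset.sum_empty, if_neg hd]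

lemma coeff_pow2 (A : PowerSeries (ZMod 2)) (d n : ℕ) :
    (PowerSeries.coeff n) (A ^ (2 ^ d))
      = if 2 ^ d ∣ n then (PowerSeries.coeff (n / 2 ^ d)) A else 0 := by
  induction d generalizing n with
  | zero => simp
  | succ d ih =>
    have hsplit : A ^ (2 ^ (d+1)) = (A ^ (2 ^ d)) ^ 2 := by
      rw [← pow_mul, pow_succ]
    rw [hsplit, coeff_sq]
    by_cases h2 : 2 ∣ n
    · rw [if_pos h2, ih]
      have hiff : 2 ^ d ∣ n / 2 ↔ 2 ^ (d+1) ∣ n := by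
        rw [Nat.dvd_div_iff_mul_dvd h2, pow_succ, mul_comm]
      by_cases hdd : 2 ^ (d+1) ∣ n
      · rw [if_pos (hiff.2 hdd), if_pos hdd]
        congr 1
        rw [Nat.div_div_eq_div_mul, ← pow_succ']
      · rw [if_neg (fun h => hdd (hiff.1 h)), if_neg hdd]
    · rw [if_neg h2, if_neg (fun h => h2 (dvd_trans (by exact Dvd.intro_left _ rfl : (2:ℕ) ∣ 2 ^ (d+1)) h))]

lemma coeff_red_fEta_pow {a : ℕ} (ha : 0 < a) (d n : ℕ) :
    (PowerSeries.coeff n) ((red (fEta a)) ^ (2 ^ d))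
      = if a * 2 ^ d ∣ n then (if IsPent (n / (a * 2 ^ d)) then 1 else 0) else 0 := by
  rw [coeff_pow2]
  by_cases h2 : 2 ^ d ∣ n
  · rw [if_pos h2, coeff_red_fEta ha]
    have hiff : a ∣ n / 2 ^ d ↔ a * 2 ^ d ∣ n := by
      rw [Nat.dvd_div_iff_mul_dvd h2, mul_comm]
    by_cases hda : a * 2 ^ d ∣ n
    · rw [if_pos (hiff.2 hda), if_pos hda]
      congr 2
      rw [Nat.div_div_eq_div_mul, mul_comm]
    · rw [if_neg (fun h => hda (hiff.1 h)), if_neg hda]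
  · rw [if_neg h2, if_neg (fun h => h2 (dvd_trans (Dvd.intro_left a rfl) h))]

-- ===== geometric series and the progression series =====

noncomputable def geo (a : ℕ) : PowerSeries (ZMod 2) :=
  PowerSeries.mk fun n => if a ∣ n then 1 else 0

noncomputable def sPar (u : ℕ) : ZMod 2 :=
  ((((range (u+1)).filter (fun v => IsPent v)).card : ℕ) : ZMod 2)

lemma coeff_geo_mul {a : ℕ} (ha : 0 < a) (B : PowerSeries (ZMod 2))
    (hB : ∀ j, ¬ a ∣ j → (PowerSeries.coeff j) B = 0) (m : ℕ) :
    (PowerSeries.coeff (a*m)) (geo a * B)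
      = ∑ t ∈ range (m+1), (PowerSeries.coeff (a*t)) B := by
  rw [PowerSeries.coeff_mul, Finset.Nat.sum_antidiagonal_eq_sum_range_succ_mk]
  have h1 : ∀ k ∈ range (a*m+1),
      (PowerSeries.coeff k (geo a)) * (PowerSeries.coeff (a*m - k)) B
        = if a ∣ k then (PowerSeries.coeff (a*m - k)) B else 0 := by
    intro k _
    rw [geo, PowerSeries.coeff_mk]
    split <;> simp
  rw [Finset.sum_congr rfl h1, ← Finset.sum_filter]
  have h2 : (range (a*m+1)).filter (fun k => a ∣ k) = (range (m+1)).image (fun t => a * t) := by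
    ext k
    simp only [mem_filter, mem_range, mem_image]
    constructor
    · rintro ⟨hk, c, rfl⟩
      refine ⟨c, ?_, rfl⟩
      have h3 : a * c ≤ a * m := by omega
      have := Nat.le_of_mul_le_mul_left h3 ha
      omega
    · rintro ⟨t, ht, rfl⟩
      have : a * t ≤ a * m := Nat.mul_le_mul_left a (by omega)
      exact ⟨by omega, ⟨t, rfl⟩⟩
  rw [h2, Finset.sum_image (by intro x _ y _ h; exact Nat.eq_of_mul_eq_mul_left ha h)]
  have h3 : ∀ t ∈ range (m+1),
      (PowerSeries.coeff (a*m - a*t)) B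
        = (PowerSeries.coeff (a*(m - t))) B := by
    intro t ht
    simp only [mem_range] at ht
    have h5 : a*m - a*t = a*(m-t) := by
      have h4 : a*(m-t) + a*t = a*m := by
        rw [← Nat.mul_add]
        congr 1
        omega
      omega
    rw [h5]
  rw [Finset.sum_congr rfl h3]
  have h4 := Finset.sum_range_reflect (fun t => (PowerSeries.coeff (a*t)) B) (m+1)
  simpa using h4

lemma coeff_P {a : ℕ} (ha : 0 < a) (b d m : ℕ) :
    (PowerSeries.coeff (b + a*m))
        (PowerSeries.X ^ b * (geo a * (red (fEta a))^(2^d)))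
      = sPar (m / 2^d) := by
  have hpow : 0 < 2^d := Nat.pow_pos (by norm_num)
  have hB : ∀ j, ¬ a ∣ j → (PowerSeries.coeff j) ((red (fEta a))^(2^d)) = 0 := by
    intro j hj
    rw [coeff_red_fEta_pow ha]
    rw [if_neg]
    intro hdvd
    exact hj (dvd_trans (Dvd.intro _ rfl) hdvd)
  rw [show b + a*m = a*m + b by ring, PowerSeries.coeff_X_pow_mul, coeff_geo_mul ha _ hB m]
  have h1 : ∀ t ∈ range (m+1),
      (PowerSeries.coeff (a*t)) ((red (fEta a))^(2^d))
        = if 2^d ∣ t then (if IsPent (t / 2^d) then (1 : ZMod 2) else 0) else 0 := by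
    intro t _
    rw [coeff_red_fEta_pow ha, Nat.mul_div_mul_left t (2^d) ha]
    by_cases h : 2^d ∣ t
    · rw [if_pos ((Nat.mul_dvd_mul_iff_left ha).2 h), if_pos h]
    · rw [if_neg (fun hh => h ((Nat.mul_dvd_mul_iff_left ha).1 hh)), if_neg h]
  rw [Finset.sum_congr rfl h1, ← Finset.sum_filter]
  have h2 : (range (m+1)).filter (fun t => 2^d ∣ t)
      = (range (m/2^d + 1)).image (fun v => 2^d * v) := by
    ext t
    simp only [mem_filter, mem_range, mem_image]
    constructor
    · rintro ⟨ht, c, rfl⟩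
      refine ⟨c, ?_, rfl⟩
      have hc : c ≤ m / 2^d := by
        rw [Nat.le_div_iff_mul_le hpow, mul_comm]
        omega
      omega
    · rintro ⟨v, hv, rfl⟩
      refine ⟨?_, ⟨v, rfl⟩⟩
      have h5 : v ≤ m / 2^d := by omega
      have h6 := Nat.div_mul_le_self m (2^d)
      have h7 : 2^d * v ≤ 2^d * (m / 2^d) := Nat.mul_le_mul_left _ h5
      have h8 : 2^d * (m / 2^d) = (m / 2^d) * 2^d := mul_comm _ _
      omega
  rw [h2, Finset.sum_image (by intro x _ y _ h; exact Nat.eq_of_mul_eq_mul_left hpow h)]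
  have h3 : ∀ v ∈ range (m/2^d + 1),
      (if IsPent ((2^d * v) / 2^d) then (1:ZMod 2) else 0) = if IsPent v then 1 else 0 := by
    intro v _
    rw [Nat.mul_div_cancel_left v hpow]
  rw [Finset.sum_congr rfl h3, Finset.sum_boole, sPar]

-- ===== counting =====

lemma sPar_one {k u : ℕ} (hk : 1 ≤ k) (h1 : pentR k ≤ u) (h2 : u ≤ pentR k + 2*k) :
    sPar u = 1 := by
  have hL : pentL (k+1) = pentL k + 3*k + 1 := by simp [pentL]
  have hu2 : u < pentL (k+1) := by
    simp only [pentR] at h1 h2 ⊢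
    omega
  have hcp : cardPent u = 2*k+1 := cardPent_eq h1 hu2
  have hfe : (range (u+1)).filter (fun v => IsPent v) = (range (u+1)).filter IsPent := rfl
  rw [sPar, hfe]
  rw [cardPent] at hcp
  rw [hcp]
  push_cast
  rw [show ((2:ZMod 2)) = 0 by decide]
  ring

lemma sum_odd_Icc (K : ℕ) : (∑ k ∈ Icc 1 K, (2*k+1)) = K*K + 2*K := by
  induction K with
  | zero => simp
  | succ K ih =>
    rw [Finset.sum_Icc_succ_top (by omega), ih]
    ring

lemma pent_sep {x y : ℕ} (h : x < y) : pentR x + 2*x < pentR y := by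
  have h1 : pentL (x+1) ≤ pentL y := pentL_strictMono.monotone (by omega)
  have h2 : pentL (x+1) = pentL x + 3*x + 1 := by simp [pentL]
  have h3 : pentL y ≤ pentR y := pentL_le_pentR y
  simp only [pentR]
  omega

lemma sPar_count {N : ℕ} (hN : 9 ≤ N) :
    (Nat.sqrt N / 2) * (Nat.sqrt N / 2)
      ≤ ((range (N+1)).filter (fun u => sPar u = 1)).card := by
  set K := Nat.sqrt N / 2 with hK
  have hsq : Nat.sqrt N * Nat.sqrt N ≤ N := by
    have := Nat.sqrt_le' N
    rwa [pow_two] at this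
  have hs3 : 3 ≤ Nat.sqrt N := by
    have h9 : Nat.sqrt 9 = 3 := by
      have h1 : 3 ≤ Nat.sqrt 9 := by rw [Nat.le_sqrt]
      have h2 : Nat.sqrt 9 < 4 := by rw [Nat.sqrt_lt]; omega
      omega
    have : Nat.sqrt 9 ≤ Nat.sqrt N := Nat.sqrt_le_sqrt hN
    omega
  have hK1 : 1 ≤ K := by omega
  have h2K : 2*K ≤ Nat.sqrt N := by omega
  have h4K : 4*(K*K) ≤ N := by
    have h1 := Nat.mul_le_mul h2K h2K
    have h2 : 2*K*(2*K) = 4*(K*K) := by ring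
    omega
  have hKK : 1*K ≤ K*K := Nat.mul_le_mul_right K hK1
  have hend : pentR K + 2*K ≤ N := by
    have hp := pentL_id K
    rw [mul_assoc] at hp
    simp only [pentR]
    omega
  have hdisj : ∀ x ∈ Icc 1 K, ∀ y ∈ Icc 1 K, x ≠ y →
      Disjoint (Icc (pentR x) (pentR x + 2*x)) (Icc (pentR y) (pentR y + 2*y)) := by
    intro x _ y _ hxy
    rw [Finset.disjoint_left]
    intro u hu1 hu2
    simp only [mem_Icc] at hu1 hu2
    rcases lt_or_gt_of_ne hxy with h | h
    · have := pent_sep h; omega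
    · have := pent_sep h; omega
  have hcard : ((Icc 1 K).biUnion (fun k => Icc (pentR k) (pentR k + 2*k))).card
      = K*K + 2*K := by
    rw [Finset.card_biUnion hdisj]
    have h5 : ∀ k ∈ Icc 1 K, (Icc (pentR k) (pentR k + 2*k)).card = 2*k+1 := by
      intro k _
      rw [Nat.card_Icc]
      omega
    rw [Finset.sum_congr rfl h5, sum_odd_Icc]
  have hsub : (Icc 1 K).biUnion (fun k => Icc (pentR k) (pentR k + 2*k))
      ⊆ (range (N+1)).filter (fun u => sPar u = 1) := by
    intro u hu
    simp only [Finset.mem_biUnion, mem_Icc] at hu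
    obtain ⟨k, hk, hu1, hu2⟩ := hu
    have hmono : pentR k ≤ pentR K := pentR_strictMono.monotone hk.2
    have hmono2 : pentR k + 2*k ≤ pentR K + 2*K := by
      have := hk.2
      omega
    simp only [mem_filter, mem_range]
    exact ⟨by omega, sPar_one hk.1 hu1 hu2⟩
  calc K*K ≤ K*K + 2*K := by omega
  _ = _ := hcard.symm
  _ ≤ _ := card_le_card hsub

-- ===== assembly lemmas =====

lemma Jcard_le {a : ℕ} (ha : 0 < a) (d x : ℕ) :
    ((range (x+1)).filter
        (fun j => (PowerSeries.coeff j) ((red (fEta a))^(2^d)) ≠ 0)).card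
      ≤ 2 * (Nat.sqrt (x / 2^d) + 1) := by
  have hpow : 0 < 2^d := Nat.pow_pos (by norm_num)
  have hac : 0 < a * 2^d := Nat.mul_pos ha hpow
  set y := x / (a * 2^d) with hy
  have hcard1 : ((range (x+1)).filter
      (fun j => (PowerSeries.coeff j) ((red (fEta a))^(2^d)) ≠ 0)).card
      ≤ ((range (y+1)).filter IsPent).card := by
    apply Finset.card_le_card_of_injOn (fun j => j / (a * 2^d))
    · intro j hj
      simp only [coe_filter, Set.mem_setOf_eq, mem_filter, mem_range] at hj
      obtain ⟨hjx, hne⟩ := hj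
      rw [coeff_red_fEta_pow ha] at hne
      by_cases hdvd : a * 2^d ∣ j
      · rw [if_pos hdvd] at hne
        simp only [coe_filter, Set.mem_setOf_eq, mem_filter, mem_range]
        constructor
        · have := Nat.div_le_div_right (c := a * 2^d) (by omega : j ≤ x)
          omega
        · by_contra hp
          rw [if_neg hp] at hne
          exact hne rfl
      · rw [if_neg hdvd] at hne
        exact absurd rfl hne
    · intro j1 hj1 j2 hj2 heq
      simp only [coe_filter, Set.mem_setOf_eq, mem_range] at hj1 hj2
      have hd1 : a * 2^d ∣ j1 := by
        by_contra hdvd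
        rw [coeff_red_fEta_pow ha, if_neg hdvd] at hj1
        exact hj1.2 rfl
      have hd2 : a * 2^d ∣ j2 := by
        by_contra hdvd
        rw [coeff_red_fEta_pow ha, if_neg hdvd] at hj2
        exact hj2.2 rfl
      have e1 := Nat.mul_div_cancel' hd1
      have e2 := Nat.mul_div_cancel' hd2
      simp only at heq
      rw [← e1, ← e2, heq]
  have hcard2 := cardPent_le y
  have hyy : Nat.sqrt y ≤ Nat.sqrt (x / 2^d) := by
    apply Nat.sqrt_le_sqrt
    rw [hy]
    apply Nat.div_le_div_left
    · exact Nat.le_mul_of_pos_left _ ha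
    · exact hpow
  omega

lemma lower_count {a b : ℕ} (ha : 0 < a) (hb : b < a) (d x : ℕ) (hxb : b ≤ x)
    (hN : 9 ≤ ((x - b)/a + 1)/2^d - 1) :
    2^d * ((Nat.sqrt (((x - b)/a + 1)/2^d - 1) / 2) * (Nat.sqrt (((x - b)/a + 1)/2^d - 1) / 2))
      ≤ ((range (x+1)).filter (fun n => n % a = b ∧
          (PowerSeries.coeff n)
            (PowerSeries.X ^ b * (geo a * (red (fEta a))^(2^d))) ≠ 0)).card := by
  have hpow : 0 < 2^d := Nat.pow_pos (by norm_num)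
  set c := 2^d with hc
  set mtop := (x - b)/a with hmtop
  set K := (mtop + 1)/c with hKdef
  set N := K - 1 with hNdef
  have hK1 : 1 ≤ K := by omega
  have hcK : c * K ≤ mtop + 1 := by
    rw [hKdef, mul_comm]
    exact Nat.div_mul_le_self _ _
  set U := (range (N+1)).filter (fun u => sPar u = 1) with hU
  have hinj : ∀ p ∈ U ×ˢ range c, b + a * (c * p.1 + p.2) ∈
      (range (x+1)).filter (fun n => n % a = b ∧
        (PowerSeries.coeff n)
          (PowerSeries.X ^ b * (geo a * (red (fEta a))^(2^d))) ≠ 0) := by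
    rintro ⟨u, r⟩ hp
    simp only [Finset.mem_product, hU, mem_filter, mem_range] at hp
    obtain ⟨⟨hu1, hu2⟩, hr⟩ := hp
    set m := c * u + r with hm
    have hmle : m ≤ mtop := by
      have h1 : u ≤ N := by omega
      have h2 : c * u ≤ c * N := Nat.mul_le_mul_left _ h1
      have h3 : c * N + c = c * K := by
        have hNK : N + 1 = K := by omega
        calc c * N + c = c * (N + 1) := by ring
        _ = c * K := by rw [hNK]
      omega
    have hnx : b + a * m ≤ x := by
      have h4 : a * m ≤ a * mtop := Nat.mul_le_mul_left _ hmle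
      have h5 : a * mtop ≤ x - b := by
        rw [hmtop, mul_comm]
        exact Nat.div_mul_le_self _ _
      omega
    simp only [mem_filter, mem_range]
    refine ⟨by omega, ?_, ?_⟩
    · rw [Nat.add_mul_mod_self_left, Nat.mod_eq_of_lt hb]
    · rw [coeff_P ha]
      have hdiv : m / c = u := by
        rw [hm, Nat.mul_add_div hpow, Nat.div_eq_of_lt hr, add_zero]
      rw [hdiv, hu2]
      exact one_ne_zero
  have hinj2 : Set.InjOn (fun p : ℕ × ℕ => b + a * (c * p.1 + p.2)) ↑(U ×ˢ range c) := by
    rintro ⟨u1, r1⟩ hp1 ⟨u2, r2⟩ hp2 heq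
    simp only [Finset.coe_product, Set.mem_prod, mem_coe, hU, mem_filter, mem_range] at hp1 hp2
    simp only at heq
    have h1 : c * u1 + r1 = c * u2 + r2 := by
      have := Nat.eq_of_mul_eq_mul_left ha (by omega : a * (c*u1+r1) = a * (c*u2+r2))
      exact this
    have hu : u1 = u2 := by
      have e1 : (c * u1 + r1) / c = u1 := by
        rw [Nat.mul_add_div hpow, Nat.div_eq_of_lt hp1.2, add_zero]
      have e2 : (c * u2 + r2) / c = u2 := by
        rw [Nat.mul_add_div hpow, Nat.div_eq_of_lt hp2.2, add_zero]
      rw [← e1, ← e2, h1]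
    have hr : r1 = r2 := by
      rw [hu] at h1
      omega
    rw [hu, hr]
  have hcardle := Finset.card_le_card_of_injOn _ hinj hinj2
  rw [Finset.card_product, Finset.card_range] at hcardle
  have hUcard : (Nat.sqrt N / 2) * (Nat.sqrt N / 2) ≤ U.card := sPar_count hN
  calc c * ((Nat.sqrt N / 2) * (Nat.sqrt N / 2)) ≤ c * U.card := Nat.mul_le_mul_left _ hUcard
  _ = U.card * c := mul_comm _ _
  _ ≤ _ := hcardle

lemma zmod2_cases (z : ZMod 2) : z = 0 ∨ z = 1 := by
  fin_cases z
  · exact Or.inl rfl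
  · exact Or.inr rfl

lemma split_bound {a b : ℕ} (F : PowerSeries ℤ) (ha : 0 < a) (hb : b < a) (d x : ℕ) :
    ((range (x+1)).filter (fun n => n % a = b ∧
        (PowerSeries.coeff n)
          (PowerSeries.X ^ b * (geo a * (red (fEta a))^(2^d))) ≠ 0)).card
      ≤ oddCount (fEta a ^ (2^d) * F) x
        + ((range (x+1)).filter (fun n => n % a = b ∧ (2:ℤ) ∣ PowerSeries.coeff n F)).card
          * ((range (x+1)).filter
              (fun j => (PowerSeries.coeff j) ((red (fEta a))^(2^d)) ≠ 0)).card := by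
  classical
  set fpow := (red (fEta a))^(2^d) with hfpow
  set G := PowerSeries.X ^ b * geo a + red F with hG
  set set1 := (range (x+1)).filter
      (fun n => (PowerSeries.coeff n) (fpow * red F) ≠ 0) with hset1
  set set2 := (range (x+1)).filter (fun n => n % a = b ∧
      (PowerSeries.coeff n) (G * fpow) ≠ 0) with hset2
  -- step 1 : subset of union
  have hGmul : G * fpow = PowerSeries.X ^ b * (geo a * fpow) + fpow * red F := by
    rw [hG, add_mul, mul_assoc]
    ring
  have hsubset : (range (x+1)).filter (fun n => n % a = b ∧
      (PowerSeries.coeff n)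
        (PowerSeries.X ^ b * (geo a * fpow)) ≠ 0) ⊆ set1 ∪ set2 := by
    intro n hn
    simp only [mem_filter, mem_range] at hn
    obtain ⟨hnx, hnab, hne⟩ := hn
    by_cases h1 : (PowerSeries.coeff n) (fpow * red F) ≠ 0
    · exact Finset.mem_union_left _ (by simp only [hset1, mem_filter, mem_range]; exact ⟨hnx, h1⟩)
    · push_neg at h1
      apply Finset.mem_union_right
      simp only [hset2, mem_filter, mem_range]
      refine ⟨hnx, hnab, ?_⟩
      rw [hGmul, map_add, h1, add_zero]
      exact hne
  have hcard1 : ((range (x+1)).filter (fun n => n % a = b ∧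
      (PowerSeries.coeff n)
        (PowerSeries.X ^ b * (geo a * fpow)) ≠ 0)).card ≤ set1.card + set2.card :=
    le_trans (card_le_card hsubset) (card_union_le _ _)
  -- step 2 : set1 = oddCount set
  have hred : red (fEta a ^ (2^d) * F) = fpow * red F := by
    rw [red, map_mul, map_pow]
    rfl
  have hcard2 : set1.card = oddCount (fEta a ^ (2^d) * F) x := by
    rw [hset1, oddCount]
    congr 1
    apply filter_congr
    intro n _
    rw [← hred]
    exact (odd_iff_red _ n).symm
  -- step 3 : set2 bounded by product
  set gset := (range (x+1)).filter
      (fun n => n % a = b ∧ (2:ℤ) ∣ PowerSeries.coeff n F) with hgset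
  set Jset := (range (x+1)).filter
      (fun j => (PowerSeries.coeff j) fpow ≠ 0) with hJset
  have hcard3 : set2.card ≤ gset.card * Jset.card := by
    have hex : ∀ n ∈ set2, ∃ p : ℕ × ℕ, p.1 + p.2 = n ∧
        (PowerSeries.coeff p.1) G ≠ 0 ∧ (PowerSeries.coeff p.2) fpow ≠ 0 := by
      intro n hn
      simp only [hset2, mem_filter, mem_range] at hn
      obtain ⟨hnx, hnab, hne⟩ := hn
      rw [PowerSeries.coeff_mul] at hne
      by_contra hall
      push_neg at hall
      apply hne
      apply Finset.sum_eq_zero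
      intro p hp
      simp only [Finset.HasAntidiagonal.mem_antidiagonal] at hp
      by_cases hg : (PowerSeries.coeff p.1) G = 0
      · rw [hg, zero_mul]
      · have := hall ⟨p.1, p.2⟩ hp hg
        rw [this, mul_zero]
    set f : ℕ → ℕ × ℕ := fun n =>
      if h : ∃ p : ℕ × ℕ, p.1 + p.2 = n ∧
          (PowerSeries.coeff p.1) G ≠ 0 ∧ (PowerSeries.coeff p.2) fpow ≠ 0
      then h.choose else (0, 0) with hf
    have hfspec : ∀ n ∈ set2, (f n).1 + (f n).2 = n ∧
        (PowerSeries.coeff (f n).1) G ≠ 0 ∧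
        (PowerSeries.coeff (f n).2) fpow ≠ 0 := by
      intro n hn
      have h := hex n hn
      rw [hf]
      simp only [dif_pos h]
      exact h.choose_spec
    have hmaps : ∀ n ∈ set2, f n ∈ gset ×ˢ Jset := by
      intro n hn
      obtain ⟨hsum, hG1, hF1⟩ := hfspec n hn
      rcases hps : f n with ⟨i, j⟩
      rw [hps] at hsum hG1 hF1
      simp only at hsum hG1 hF1
      simp only [hset2, mem_filter, mem_range] at hn
      obtain ⟨hnx, hnab, _⟩ := hn
      have hdvd : a * 2^d ∣ j := by
        by_contra hdd
        rw [hfpow, coeff_red_fEta_pow ha, if_neg hdd] at hF1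
        exact hF1 rfl
      have hadvd : a ∣ j := dvd_trans (Dvd.intro _ rfl) hdvd
      obtain ⟨q, hq⟩ := hadvd
      have hmod : i % a = b := by
        rw [← hnab, ← hsum, hq, Nat.add_mul_mod_self_left]
      have hble : b ≤ i := by
        rw [← hmod]
        exact Nat.mod_le _ _
      have hXgeo : (PowerSeries.coeff i) (PowerSeries.X ^ b * geo a) = 1 := by
        have h1 : i = (i - b) + b := by omega
        rw [h1, PowerSeries.coeff_X_pow_mul, geo, PowerSeries.coeff_mk, if_pos]
        have h2 := Nat.div_add_mod i a
        exact ⟨i / a, by omega⟩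
      have hFeven : (PowerSeries.coeff i) (red F) = 0 := by
        rcases zmod2_cases ((PowerSeries.coeff i) (red F)) with h | h
        · exact h
        · exfalso
          apply hG1
          rw [hG, map_add, hXgeo, h]
          decide
      simp only [Finset.mem_product, hgset, hJset, mem_filter, mem_range]
      refine ⟨⟨by omega, hmod, ?_⟩, by omega, hF1⟩
      rw [even_iff_red]
      exact hFeven
    have hinj : Set.InjOn f ↑set2 := by
      intro n1 hn1 n2 hn2 heq
      have h1 := (hfspec n1 (by exact_mod_cast hn1)).1
      have h2 := (hfspec n2 (by exact_mod_cast hn2)).1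
      rw [← h1, ← h2, heq]
    have := Finset.card_le_card_of_injOn f hmaps hinj
    rwa [Finset.card_product] at this
  calc _ ≤ set1.card + set2.card := hcard1
  _ ≤ oddCount (fEta a ^ (2^d) * F) x + gset.card * Jset.card := by omega
  _ = _ := rfl

lemma arith_helper (a b c x q rq K rk N s t : ℕ)
    (ha : 1 ≤ a) (hb : b < a) (hc : 1 ≤ c) (hbx : b ≤ x)
    (h1 : a*q + rq = x - b) (h2 : rq < a)
    (h3 : c*K + rk = q + 1) (h4 : rk < c)
    (h5 : N = K - 1) (h6 : 16 ≤ N)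
    (h7 : s*s ≤ N) (h8 : N < (s+1)*(s+1))
    (h9 : t = s/2) :
    x ≤ 16*a*(c*(t*t)) := by
  have hts : s ≤ 2*t + 1 := by omega
  have hs4 : 4 ≤ s := by
    by_contra hs
    push_neg at hs
    have h10 : (s+1)*(s+1) ≤ 4*4 := Nat.mul_le_mul (by omega) (by omega)
    omega
  have ht2 : 2 ≤ t := by omega
  have hN2 : N ≤ 4*(t*t) + 8*t + 3 := by
    have h11 : s + 1 ≤ 2*t+2 := by omega
    have h12 := Nat.mul_le_mul h11 h11
    have h13 : (2*t+2)*(2*t+2) = 4*(t*t) + 8*t + 4 := by ring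
    omega
  have hKN : K = N + 1 := by omega
  have hcKN : c*K = c*N + c := by rw [hKN]; ring
  have hq2 : q ≤ c*N + 2*c := by omega
  have hxq : x ≤ a*q + a + b := by omega
  have haq : a*q ≤ a*(c*N + 2*c) := Nat.mul_le_mul_left a hq2
  have hexp : a*(c*N + 2*c) = a*c*N + 2*(a*c) := by ring
  have hacN : a*c*N ≤ a*c*(4*(t*t)+8*t+3) := Nat.mul_le_mul_left _ hN2
  have hexp2 : a*c*(4*(t*t)+8*t+3) = 4*(a*c*(t*t)) + 8*(a*c*t) + 3*(a*c) := by ring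
  have hgoal : 16*a*(c*(t*t)) = 16*(a*c*(t*t)) := by ring
  have hPQ : (a*c*t)*t = a*c*(t*t) := by ring
  have hQ2 : (a*c*t)*2 ≤ (a*c*t)*t := Nat.mul_le_mul_left _ ht2
  have hRt : (a*c)*t = a*c*t := by ring
  have hR2 : (a*c)*2 ≤ (a*c)*t := Nat.mul_le_mul_left _ ht2
  have hRa : a ≤ a*c := Nat.le_mul_of_pos_right a (by omega)
  rw [hgoal]
  omega

lemma lower_count_clean {a b : ℕ} (ha : 0 < a) (hb : b < a) (d x : ℕ) (hbx : b ≤ x)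
    (hN16 : 16 ≤ ((x - b)/a + 1)/2^d - 1) :
    x ≤ 16*a*(2^d *
      ((Nat.sqrt (((x - b)/a + 1)/2^d - 1) / 2) * (Nat.sqrt (((x - b)/a + 1)/2^d - 1) / 2))) := by
  have hc1 : 1 ≤ 2^d := Nat.one_le_two_pow
  apply arith_helper a b (2^d) x ((x-b)/a) ((x-b)%a) (((x-b)/a + 1)/2^d) (((x-b)/a + 1) % 2^d)
      (((x - b)/a + 1)/2^d - 1) (Nat.sqrt (((x - b)/a + 1)/2^d - 1))
      (Nat.sqrt (((x - b)/a + 1)/2^d - 1) / 2) ha hb hc1 hbx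
  · exact Nat.div_add_mod _ _
  · exact Nat.mod_lt _ ha
  · exact Nat.div_add_mod _ _
  · exact Nat.mod_lt _ (by omega)
  · rfl
  · exact hN16
  · have := Nat.sqrt_le' (((x - b)/a + 1)/2^d - 1)
    rwa [pow_two] at this
  · exact Nat.lt_succ_sqrt _
  · rfl

end EV

set_option maxHeartbeats 1000000

/-- If `f_a^{2^d}·F` is lacunary mod 2 for all sufficiently large `d`, then for every
`0 ≤ b < a` the number `g_{a,b}(x)` of even coefficients of `F` in degrees `n ≤ x`,
`n ≡ b (mod a)`, satisfies `g_{a,b}(x)/√x → ∞`. -/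
theorem even_values_over_progressions
    (F : PowerSeries ℤ) (a : ℕ) (ha : 0 < a)
    (hlac : ∀ᶠ d : ℕ in Filter.atTop, LacunaryMod2 ((fEta a) ^ (2 ^ d) * F)) :
    ∀ b : ℕ, b < a →
      Filter.Tendsto
        (fun x : ℕ =>
          ((((Finset.range (x + 1)).filter fun n =>
              n % a = b ∧ (2 : ℤ) ∣ PowerSeries.coeff n F).card : ℝ) / Real.sqrt x))
        Filter.atTop Filter.atTop := by
  intro b hb
  rw [Filter.tendsto_atTop]
  intro C
  obtain ⟨D, hD⟩ := exists_nat_ge ((128*(a:ℝ)*(max C 1))^2)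
  obtain ⟨d, hd1, hd2⟩ := (hlac.and (Filter.eventually_ge_atTop D)).exists
  have hcpos : (0:ℕ) < 2^d := Nat.pow_pos (by norm_num)
  have h2d : ((128*(a:ℝ)*(max C 1))^2) ≤ ((2^d : ℕ) : ℝ) := by
    calc ((128*(a:ℝ)*(max C 1))^2) ≤ (D:ℝ) := hD
    _ ≤ (d:ℝ) := Nat.cast_le.2 hd2
    _ ≤ ((2^d : ℕ):ℝ) := Nat.cast_le.2 (Nat.lt_two_pow_self (n := d)).le
  have hsqrt2d : 128*(a:ℝ)*(max C 1) ≤ Real.sqrt ((2^d : ℕ) : ℝ) := by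
    have h0 : (0:ℝ) ≤ 128*(a:ℝ)*(max C 1) := by positivity
    calc 128*(a:ℝ)*(max C 1) = Real.sqrt ((128*(a:ℝ)*(max C 1))^2) := (Real.sqrt_sq h0).symm
    _ ≤ _ := Real.sqrt_le_sqrt h2d
  have hεpos : (0:ℝ) < 1/(32*a) := by positivity
  have hEv1 : ∀ᶠ x : ℕ in Filter.atTop,
      (oddCount (fEta a ^ 2^d * F) x : ℝ)/x < 1/(32*a) := hd1.eventually (gt_mem_nhds hεpos)
  have hEvN : ∀ᶠ x : ℕ in Filter.atTop, 16 ≤ ((x - b)/a + 1)/2^d - 1 := by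
    rw [Filter.eventually_atTop]
    refine ⟨b + 18*2^d*a, fun x hx => ?_⟩
    have h1 : 18*2^d ≤ (x - b)/a := by
      rw [Nat.le_div_iff_mul_le ha]
      omega
    have h2 : 18 ≤ ((x - b)/a + 1)/2^d := by
      rw [Nat.le_div_iff_mul_le hcpos]
      omega
    omega
  filter_upwards [hEv1, hEvN, Filter.eventually_ge_atTop (max b (max 1 (2^d)))]
    with x hx1 hxN hxge
  have hx1' : 1 ≤ x := le_trans (le_trans (le_max_left 1 (2^d)) (le_max_right b _)) hxge
  have hxb : b ≤ x := le_trans (le_max_left b _) hxge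
  have hxc : 2^d ≤ x := le_trans (le_trans (le_max_right 1 (2^d)) (le_max_right b _)) hxge
  have hlow := EV.lower_count ha hb d x hxb (by omega : 9 ≤ ((x - b)/a + 1)/2^d - 1)
  have hclean := EV.lower_count_clean ha hb d x hxb hxN
  have hxL := le_trans hclean (Nat.mul_le_mul_left (16*a) hlow)
  have hsplit := EV.split_bound F ha hb d x
  have hJ := EV.Jcard_le ha d x
  set O := oddCount (fEta a ^ (2^d) * F) x with hO
  set g := ((Finset.range (x+1)).filter
      (fun n => n % a = b ∧ (2:ℤ) ∣ PowerSeries.coeff n F)).card with hg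
  set J := ((Finset.range (x+1)).filter
      (fun j => (PowerSeries.coeff j) ((EV.red (fEta a))^(2^d)) ≠ 0)).card with hJdef
  have hxOgJ : x ≤ 16*a*(O + g*J) := le_trans hxL (Nat.mul_le_mul_left _ hsplit)
  clear_value O g J
  clear hxL hsplit hlow hclean hxN
  have hxpos : (0:ℝ) < x := by exact_mod_cast hx1'
  have hsx : (0:ℝ) < Real.sqrt x := Real.sqrt_pos.2 hxpos
  have hOr : 32*(a:ℝ)*O ≤ x := by
    rw [div_lt_div_iff₀ hxpos (by positivity)] at hx1
    nlinarith [hx1]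
  have hmain : (x:ℝ) ≤ 16*a*O + 16*a*((g:ℝ)*(J:ℝ)) := by
    have hc := (Nat.cast_le (α := ℝ)).2 hxOgJ
    push_cast at hc
    have hr : 16*(a:ℝ)*((O:ℝ) + (g:ℝ)*(J:ℝ)) = 16*a*O + 16*a*((g:ℝ)*(J:ℝ)) := by ring
    linarith [hc]
  have hx2 : (x:ℝ) ≤ 32*(a:ℝ)*((g:ℝ)*(J:ℝ)) := by linarith [hmain, hOr]
  set sc := Real.sqrt ((2^d : ℕ) : ℝ) with hsc
  have hscpos : 0 < sc := Real.sqrt_pos.2 (by exact_mod_cast hcpos)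
  have hscx : sc ≤ Real.sqrt x := Real.sqrt_le_sqrt (by exact_mod_cast hxc)
  have hu : sc * ((Nat.sqrt (x / 2^d) : ℕ) : ℝ) ≤ Real.sqrt x := by
    have h1 : ((Nat.sqrt (x / 2^d) : ℕ) : ℝ) ≤ Real.sqrt ((x / 2^d : ℕ) : ℝ) :=
      Real.nat_sqrt_le_real_sqrt
    have h2 : ((x / 2^d : ℕ) : ℝ) ≤ (x:ℝ) / ((2^d : ℕ) : ℝ) := by
      have h3 := Nat.cast_div_le (α := ℝ) (m := x) (n := 2^d)
      push_cast at h3 ⊢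
      exact h3
    have h4 : Real.sqrt ((x:ℝ) / ((2^d : ℕ) : ℝ)) = Real.sqrt x / sc :=
      Real.sqrt_div (by positivity) _
    have h5 : ((Nat.sqrt (x / 2^d) : ℕ) : ℝ) ≤ Real.sqrt x / sc := by
      calc _ ≤ _ := h1
      _ ≤ Real.sqrt ((x:ℝ) / ((2^d : ℕ) : ℝ)) := Real.sqrt_le_sqrt h2
      _ = _ := h4
    calc sc * ((Nat.sqrt (x / 2^d) : ℕ) : ℝ) ≤ sc * (Real.sqrt x / sc) :=
          mul_le_mul_of_nonneg_left h5 (le_of_lt hscpos)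
    _ = Real.sqrt x := by field_simp
  have hJr : sc * (J:ℝ) ≤ 4 * Real.sqrt x := by
    have h1 : (J:ℝ) ≤ 2*(((Nat.sqrt (x / 2^d) : ℕ) : ℝ) + 1) := by
      have h2 := (Nat.cast_le (α := ℝ)).2 hJ
      push_cast at h2
      nlinarith [h2]
    have h2 : sc * (J:ℝ) ≤ sc * (2*(((Nat.sqrt (x / 2^d) : ℕ) : ℝ) + 1)) :=
      mul_le_mul_of_nonneg_left h1 (le_of_lt hscpos)
    nlinarith [hu, hscx, h2]
  have hgnn : (0:ℝ) ≤ (g:ℝ) := Nat.cast_nonneg _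
  have hann : (0:ℝ) < (a:ℝ) := by exact_mod_cast ha
  have hfinal : sc * Real.sqrt x ≤ 128*(a:ℝ)*g := by
    have h1 : sc * (x:ℝ) ≤ 32*(a:ℝ)*(g:ℝ)*(sc*(J:ℝ)) := by
      have h1a := mul_le_mul_of_nonneg_left hx2 (le_of_lt hscpos)
      nlinarith [h1a]
    have h2 : (32:ℝ)*(a:ℝ)*(g:ℝ)*(sc*(J:ℝ)) ≤ 32*(a:ℝ)*(g:ℝ)*(4*Real.sqrt x) := by
      apply mul_le_mul_of_nonneg_left hJr
      positivity
    have h3 : sc * (x:ℝ) ≤ 128*(a:ℝ)*(g:ℝ)*Real.sqrt x := by nlinarith [h1, h2]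
    have h4 : (x:ℝ) = Real.sqrt x * Real.sqrt x := (Real.mul_self_sqrt (le_of_lt hxpos)).symm
    have h5 : sc * Real.sqrt x * Real.sqrt x ≤ 128*(a:ℝ)*(g:ℝ)*Real.sqrt x := by
      nlinarith [h3, h4]
    exact le_of_mul_le_mul_right h5 hsx
  rw [le_div_iff₀ hsx]
  have h6 : 128*(a:ℝ)*(max C 1) * Real.sqrt x ≤ sc * Real.sqrt x :=
    mul_le_mul_of_nonneg_right hsqrt2d (le_of_lt hsx)
  have h7 : (max C 1) * Real.sqrt x ≤ (g:ℝ) := by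
    have h8 : (0:ℝ) < 128*(a:ℝ) := by positivity
    have h9 : 128*(a:ℝ)*((max C 1) * Real.sqrt x) ≤ 128*(a:ℝ)*(g:ℝ) := by
      nlinarith [h6, hfinal]
    exact le_of_mul_le_mul_left h9 h8
  calc C * Real.sqrt x ≤ (max C 1) * Real.sqrt x :=
        mul_le_mul_of_nonneg_right (le_max_left C 1) (le_of_lt hsx)
  _ ≤ (g:ℝ) := h7
end
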